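/- arXiv:1204.1927 — 8 statements merged into one kernel-verified Lean document; each statement's English description precedes it below -/
import Mathlib

section
/- The ring 3-graph R_t has the (2t, t+1)-property: every set of t+1 vertices of R_t contains an edge. Equivalently, every independent set of vertices in R_t has size at most t. -/
/-- The edge set of the ring 3-graph `R_t`: vertices are `(i, false) = x_i` and
`(i, true) = y_i` for `i : ZMod t`, and the edges are `{x_i, y_i, x_{i+1}}` and
`{x_i, y_i, y_{i+1}}` for each `i`. -/
def ringEdges (t : ℕ) : Set (Finset (ZMod t × Bool)) :=
  {e | ∃ (i : ZMod t) (b : Bool), e = {(i, false), (i, true), (i + 1, b)}}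

/-- `R_t` has the `(2t, t+1)`-property: every set of `t+1` vertices contains an edge;
equivalently, every independent set has size at most `t`. -/
theorem ring_two_t_t_plus_one_property (t : ℕ) (ht : 2 ≤ t) :
    (∀ T : Finset (ZMod t × Bool), T.card = t + 1 → ∃ e ∈ ringEdges t, e ⊆ T) ∧
    (∀ S : Finset (ZMod t × Bool), (∀ e ∈ ringEdges t, ¬ e ⊆ S) → S.card ≤ t) := by
  classical
  haveI : NeZero t := ⟨by omega⟩
  have key : ∀ S : Finset (ZMod t × Bool), (∀ e ∈ ringEdges t, ¬ e ⊆ S) → S.card ≤ t := by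
    intro S hS
    have hSmem : ∀ (i : ZMod t) (b : Bool),
        (i, false) ∈ S → (i, true) ∈ S → (i + 1, b) ∉ S := by
      intro i b h0 h1 hb
      exact hS {(i, false), (i, true), (i + 1, b)} ⟨i, b, rfl⟩
        (by simp [Finset.insert_subset_iff, h0, h1, hb])
    set f : ZMod t → ℕ := fun i => (S.filter (fun p => p.1 = i)).card with hf
    have hcard : S.card = ∑ i : ZMod t, f i :=
      Finset.card_eq_sum_card_fiberwise (fun x _ => Finset.mem_univ x.1)
    set A : Finset (ZMod t) :=
      Finset.univ.filter (fun i => (i, false) ∈ S ∧ (i, true) ∈ S) with hA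
    set B : Finset (ZMod t) := A.image (· + 1) with hB
    have hfB : ∀ i ∈ B, f i = 0 := by
      intro i hi
      rw [hB, Finset.mem_image] at hi
      obtain ⟨j, hj, rfl⟩ := hi
      rw [hA, Finset.mem_filter] at hj
      rw [hf]
      simp only [Finset.card_eq_zero, Finset.filter_eq_empty_iff]
      rintro ⟨k, b⟩ hk h
      simp only at h
      subst h
      exact hSmem j b hj.2.1 hj.2.2 hk
    have hfle2 : ∀ i, f i ≤ 2 := by
      intro i
      rw [hf]
      calc (S.filter (fun p => p.1 = i)).card
          ≤ ({(i, false), (i, true)} : Finset (ZMod t × Bool)).card := by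
            apply Finset.card_le_card
            rintro ⟨k, b⟩ hk
            rw [Finset.mem_filter] at hk
            simp only at hk
            cases b <;> simp [hk.2]
        _ ≤ 2 := Finset.card_insert_le _ _ |>.trans (by simp)
    have hf1 : ∀ i ∉ A, f i ≤ 1 := by
      intro i hi
      rw [hA, Finset.mem_filter] at hi
      push_neg at hi
      have hi' := hi (Finset.mem_univ i)
      rw [hf]
      apply Finset.card_le_one.mpr
      rintro ⟨a1, a2⟩ ha ⟨b1, b2⟩ hb
      simp only [Finset.mem_filter] at ha hb
      obtain ⟨haS, ha1⟩ := ha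
      obtain ⟨hbS, hb1⟩ := hb
      subst ha1; subst hb1
      cases a2 <;> cases b2
      · rfl
      · exact absurd hbS (hi' haS)
      · exact absurd haS (hi' hbS)
      · rfl
    have hfA2 : ∀ i ∈ A, 1 ≤ f i := by
      intro i hi
      rw [hA, Finset.mem_filter] at hi
      rw [hf]
      apply Finset.card_pos.mpr
      exact ⟨(i, false), Finset.mem_filter.mpr ⟨hi.2.1, rfl⟩⟩
    have hdisj : Disjoint A B := by
      rw [Finset.disjoint_left]
      intro i hiA hiB
      have h0 := hfB i hiB
      have h1 := hfA2 i hiA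
      omega
    have hBcard : B.card = A.card := Finset.card_image_of_injective _ (add_left_injective 1)
    have hBsub : B ⊆ Finset.univ \ A := by
      intro i hi
      simp only [Finset.mem_sdiff, Finset.mem_univ, true_and]
      exact fun hiA => Finset.disjoint_left.mp hdisj hiA hi
    have hUc : (Finset.univ : Finset (ZMod t)).card = t := by
      simp [ZMod.card]
    have h2a : A.card + A.card ≤ t := by
      have := Finset.card_union_le A B
      have hle : (A ∪ B).card ≤ t := by
        calc (A ∪ B).card ≤ (Finset.univ : Finset (ZMod t)).card :=
              Finset.card_le_card (Finset.subset_univ _)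
          _ = t := hUc
      rw [Finset.card_union_of_disjoint hdisj, hBcard] at hle
      omega
    have hsplit : ∑ i : ZMod t, f i = ∑ i ∈ Finset.univ \ A, f i + ∑ i ∈ A, f i :=
      (Finset.sum_sdiff (Finset.subset_univ A)).symm
    have hsplit2 : ∑ i ∈ Finset.univ \ A, f i
        = ∑ i ∈ (Finset.univ \ A) \ B, f i + ∑ i ∈ B, f i :=
      (Finset.sum_sdiff hBsub).symm
    have hBzero : ∑ i ∈ B, f i = 0 := Finset.sum_eq_zero hfB
    have hAle : ∑ i ∈ A, f i ≤ 2 * A.card := by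
      calc ∑ i ∈ A, f i ≤ ∑ _i ∈ A, 2 := Finset.sum_le_sum (fun i _ => hfle2 i)
        _ = 2 * A.card := by rw [Finset.sum_const]; ring
    have hRle : ∑ i ∈ (Finset.univ \ A) \ B, f i ≤ ((Finset.univ \ A) \ B).card := by
      calc ∑ i ∈ (Finset.univ \ A) \ B, f i ≤ ∑ _i ∈ (Finset.univ \ A) \ B, 1 := by
            apply Finset.sum_le_sum
            intro i hi
            have : i ∉ A := by
              have := Finset.mem_sdiff.mp (Finset.mem_sdiff.mp hi).1
              exact this.2
            exact hf1 i this
        _ = ((Finset.univ \ A) \ B).card := by simp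
    have hRcard : ((Finset.univ \ A) \ B).card = t - A.card - A.card := by
      rw [Finset.card_sdiff_of_subset hBsub, Finset.card_sdiff_of_subset (Finset.subset_univ A), hUc, hBcard]
    rw [hcard, hsplit, hsplit2, hBzero]
    omega
  refine ⟨?_, key⟩
  intro T hT
  by_contra h
  push_neg at h
  have := key T (fun e he hsub => h e he hsub)
  omega
end

section
/- Let t ≥ 2, let G be a 3-uniform hypergraph on n vertices, and suppose every pair of distinct vertices of G has co-degree at least b·n, where b = √2/√t + ε for some ε > 0 and n is sufficiently large (depending on ε and t). Then G contains vertices u_0, v_0, u_1, v_1, ..., u_{s-1}, v_{s-1} (for some 2 ≤ s ≤ t), with the pairs {u_i, v_i} pairwise distinct, such that {u_i, v_i, u_{i+1}} and {u_i, v_i, v_{i+1}} are edges of G for all i mod s. -/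
/-!
Join two ordered pairs of distinct vertices `(x, y) → (z, w)` when `z` and `w` both lie in the
co-neighbourhood of `{x, y}`. A shortest cycle of this digraph visits pairwise distinct sets
`{x, y}`, because the out-neighbours of `(x, y)` only depend on `{x, y}`; so a cycle of length at
most `t` is a degenerate ring. The digraph has at most `n²` vertices and minimum out-degree about
`2n²/t`.

In a digraph without cycles of length at most `t`, let `g j` be the least size of a ball of
radius `j`. Counting the pairs `(u, w)` with `w` in a ball around `u` inside a smallest ball of
radius `j` (no two such pairs are reverse to each other when `2j ≤ t`) gives
`∑ ℓ, g ℓ (g (j - ℓ) - g (j - ℓ - 1)) ≤ g j (g j + 1) / 2`, and by induction this forces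
`g j ≥ (j + 1) D / 2 - O(t)` for the minimum out-degree `D`. At `j = ⌊t/2⌋` the same count over
all `N` vertices gives `2 g j ≤ N + 1`, hence `(⌊t/2⌋ + 1) D ≤ N + O(t)`, which contradicts the
co-degree bound once `n` is large.
-/

open Finset

noncomputable section

namespace CodegreeRing

def lag (g : ℕ → ℝ) (k : ℕ) : ℝ := if k = 0 then 0 else g (k - 1)

@[simp] lemma lag_zero (g : ℕ → ℝ) : lag g 0 = 0 := if_pos rfl

@[simp] lemma lag_succ (g : ℕ → ℝ) (k : ℕ) : lag g (k + 1) = g k := by simp [lag]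

lemma lag_of_ne_zero (g : ℕ → ℝ) {k : ℕ} (hk : k ≠ 0) : lag g k = g (k - 1) := if_neg hk

def selfConv (g : ℕ → ℝ) (j : ℕ) : ℝ := ∑ k ∈ range (j + 1), g k * g (j - k)

def convIncr (g : ℕ → ℝ) (j : ℕ) : ℝ := ∑ ℓ ∈ range (j + 1), g ℓ * (g (j - ℓ) - lag g (j - ℓ))

lemma sum_lag_mul_eq_sum_mul_lag (b c : ℕ → ℝ) (j : ℕ) :
    ∑ ℓ ∈ range (j + 1), lag b ℓ * c (j - ℓ) = ∑ ℓ ∈ range (j + 1), b ℓ * lag c (j - ℓ) := by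
  rw [sum_range_succ', sum_range_succ]
  simp only [lag_zero, zero_mul, Nat.sub_self, mul_zero, add_zero, lag_succ]
  refine sum_congr rfl fun i hi => ?_
  rw [lag_of_ne_zero c (by simp at hi; omega)]
  congr 2

lemma sum_sub_lag_mul_eq (b c : ℕ → ℝ) (j : ℕ) :
    ∑ ℓ ∈ range (j + 1), (b ℓ - lag b ℓ) * c (j - ℓ)
      = ∑ ℓ ∈ range (j + 1), b ℓ * (c (j - ℓ) - lag c (j - ℓ)) := by
  simp only [sub_mul, mul_sub, sum_sub_distrib, sum_lag_mul_eq_sum_mul_lag]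

lemma sum_mul_reflect (b c : ℕ → ℝ) (j : ℕ) :
    ∑ k ∈ range (j + 1), b k * c (j - k) = ∑ k ∈ range (j + 1), c k * b (j - k) := by
  rw [← sum_range_reflect]
  refine sum_congr rfl fun i hi => ?_
  rw [mul_comm, Nat.add_sub_cancel, Nat.sub_sub_self (by simp at hi; omega)]

lemma selfConv_sub_selfConv (g p : ℕ → ℝ) (j : ℕ) :
    selfConv g j - selfConv p j = ∑ k ∈ range (j + 1), (g k - p k) * (g (j - k) + p (j - k)) := by
  have hcross := sum_mul_reflect g p j
  simp only [selfConv, sub_mul, mul_add, sum_sub_distrib, sum_add_distrib] at hcross ⊢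
  linarith

lemma convIncr_succ (g : ℕ → ℝ) (j : ℕ) :
    convIncr g (j + 1) = selfConv g (j + 1) - selfConv g j := by
  have hlag : ∑ ℓ ∈ range (j + 2), g ℓ * lag g (j + 1 - ℓ) = selfConv g j := by
    rw [sum_range_succ, Nat.sub_self, lag_zero, mul_zero, add_zero]
    refine sum_congr rfl fun i hi => ?_
    rw [lag_of_ne_zero g (by simp at hi; omega)]
    congr 2
    omega
  rw [convIncr, ← hlag]
  simp only [mul_sub, sum_sub_distrib, selfConv]

lemma convIncr_mono {g p : ℕ → ℝ} {j : ℕ} (hj : 1 ≤ j) (hle : ∀ k ≤ j, p k ≤ g k)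
    (hp0 : 0 ≤ p 0) (hg : Monotone g) (hp : Monotone p) :
    convIncr p j ≤ convIncr g j := by
  obtain ⟨i, rfl⟩ : ∃ i, j = i + 1 := ⟨j - 1, by omega⟩
  suffices h : ∑ k ∈ range (i + 1), (g k - p k) * (g (i - k) + p (i - k))
      ≤ ∑ k ∈ range (i + 2), (g k - p k) * (g (i + 1 - k) + p (i + 1 - k)) by
    rw [← sub_nonneg, ← selfConv_sub_selfConv, ← selfConv_sub_selfConv] at h
    rw [convIncr_succ, convIncr_succ]
    linarith
  have hlast : 0 ≤ (g (i + 1) - p (i + 1)) * (g 0 + p 0) :=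
    mul_nonneg (by linarith [hle (i + 1) le_rfl]) (by linarith [hle 0 (by omega)])
  rw [sum_range_succ _ (i + 1), Nat.sub_self]
  refine le_add_of_le_of_nonneg (sum_le_sum fun k hk => ?_) hlast
  simp only [mem_range] at hk
  have hshift : i + 1 - k = (i - k) + 1 := by omega
  rw [hshift]
  exact mul_le_mul_of_nonneg_left (add_le_add (hg (Nat.le_succ _)) (hp (Nat.le_succ _)))
    (by linarith [hle k (by omega)])

lemma lag_le {g : ℕ → ℝ} (hg : Monotone g) (hg0 : 0 ≤ g 0) (k : ℕ) : lag g k ≤ g k := by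
  rcases k with _ | k
  · rwa [lag_zero]
  · rw [lag_succ]
    exact hg k.le_succ

lemma card_filter_eq_sub_lag {ι : Type*} (T : Finset ι) (f : ι → ℕ) (ℓ : ℕ) :
    (#{u ∈ T | f u = ℓ} : ℝ) = #{u ∈ T | f u ≤ ℓ} - lag (fun ℓ => (#{u ∈ T | f u ≤ ℓ} : ℝ)) ℓ := by
  rcases ℓ with _ | ℓ
  · simp only [lag_zero, sub_zero, Nat.le_zero]
  · have hsplit : #{u ∈ T | f u ≤ ℓ} + #{u ∈ T | f u = ℓ + 1} = #{u ∈ T | f u ≤ ℓ + 1} := by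
      classical
      rw [← card_union_of_disjoint (disjoint_filter.2 fun u _ h => by omega), ← filter_or]
      exact congrArg card (filter_congr fun u _ => by omega)
    rw [lag_succ, ← hsplit]
    push_cast
    ring

lemma sum_comp_eq_sum_sub_lag {ι : Type*} (T : Finset ι) (f : ι → ℕ) {j : ℕ}
    (hf : ∀ u ∈ T, f u ≤ j) (φ : ℕ → ℝ) :
    ∑ u ∈ T, φ (f u) = ∑ ℓ ∈ range (j + 1),
      ((#{u ∈ T | f u ≤ ℓ} : ℝ) - lag (fun ℓ => (#{u ∈ T | f u ≤ ℓ} : ℝ)) ℓ) * φ ℓ := by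
  rw [← sum_fiberwise_of_maps_to (g := f) (t := range (j + 1))
    fun u hu => mem_range.2 (Nat.lt_succ_of_le (hf u hu))]
  refine sum_congr rfl fun ℓ _ => ?_
  rw [sum_congr rfl fun u hu => by rw [(mem_filter.1 hu).2], sum_const, nsmul_eq_mul,
    card_filter_eq_sub_lag]

/-- The lower bound `(k + 1) D / 2 - S ≤ g k` known for `1 ≤ k < j`, continued monotonically to
`k = j`. -/
def linearProfile (D S : ℝ) (j k : ℕ) : ℝ :=
  if k = 0 then 0 else ((min k (j - 1) : ℕ) + 1 : ℝ) * D / 2 - S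

lemma linearProfile_zero (D S : ℝ) (j : ℕ) : linearProfile D S j 0 = 0 := if_pos rfl

lemma linearProfile_of_le (D S : ℝ) {j k : ℕ} (hk : 1 ≤ k) (hkj : k ≤ j - 1) :
    linearProfile D S j k = ((k : ℝ) + 1) * D / 2 - S := by
  rw [linearProfile, if_neg (by omega), min_eq_left hkj]

lemma linearProfile_self (D S : ℝ) {j : ℕ} (hj : 2 ≤ j) :
    linearProfile D S j j = (j : ℝ) * D / 2 - S := by
  rw [linearProfile, if_neg (by omega), min_eq_right (by omega), Nat.cast_sub (by omega)]
  ring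

lemma linearProfile_monotone {D S : ℝ} (j : ℕ) (hj : 2 ≤ j) (hS : 0 ≤ S) (hSD : S ≤ D / 2) :
    Monotone (linearProfile D S j) := by
  refine monotone_nat_of_le_succ fun k => ?_
  rcases Nat.eq_zero_or_pos k with rfl | hk
  · rw [linearProfile_of_le D S le_rfl (by omega), linearProfile_zero]
    linarith
  · have hmin : ((min k (j - 1) : ℕ) : ℝ) ≤ ((min (k + 1) (j - 1) : ℕ) : ℝ) := by
      exact_mod_cast (by omega : min k (j - 1) ≤ min (k + 1) (j - 1))
    simp only [linearProfile, if_neg (by omega : k ≠ 0), if_neg (by omega : k + 1 ≠ 0)]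
    nlinarith

lemma linearProfile_nonneg {D S : ℝ} (j : ℕ) (hS : 0 ≤ S) (hSD : S ≤ D / 2) (k : ℕ) :
    0 ≤ linearProfile D S j k := by
  unfold linearProfile
  split_ifs with hk
  · exact le_rfl
  · have : (0 : ℝ) ≤ ((min k (j - 1) : ℕ) : ℝ) := Nat.cast_nonneg _
    nlinarith

lemma sum_range_natCast (m : ℕ) : ∑ i ∈ range m, (i : ℝ) = ((m : ℝ) ^ 2 - m) / 2 := by
  induction m with
  | zero => simp
  | succ k ih => rw [sum_range_succ, ih]; push_cast; ring

lemma convIncr_linearProfile (D S : ℝ) {j : ℕ} (hj : 3 ≤ j) :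
    convIncr (linearProfile D S j) j
      = D / 2 * (D / 2 * ((((j : ℝ) - 2) ^ 2 + 3 * ((j : ℝ) - 2)) / 2) - ((j : ℝ) - 2) * S)
        + ((j : ℝ) * D / 2 - S) * (D - S) := by
  obtain ⟨m, rfl⟩ : ∃ m, j = m + 2 := ⟨j - 2, by omega⟩
  have hmid : ∀ i ∈ range m, linearProfile D S (m + 2) (i + 1) *
      (linearProfile D S (m + 2) (m + 2 - (i + 1))
        - lag (linearProfile D S (m + 2)) (m + 2 - (i + 1)))
      = (i : ℝ) * (D / 2 * (D / 2)) + (D - S) * (D / 2) := by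
    intro i hi
    simp only [mem_range] at hi
    rw [show m + 2 - (i + 1) = (m - i) + 1 by omega, lag_succ,
      linearProfile_of_le D S (by omega) (by omega), linearProfile_of_le D S (by omega) (by omega)]
    rcases Nat.eq_zero_or_pos (m - i) with h0 | hpos
    · omega
    rw [linearProfile_of_le D S hpos (by omega)]
    push_cast [Nat.cast_sub hi.le]
    ring
  rw [convIncr, sum_range_succ, sum_range_succ, sum_range_succ', sum_congr rfl hmid,
    sum_add_distrib, ← sum_mul, sum_range_natCast, sum_const, card_range, Nat.sub_self,
    show m + 2 - (m + 1) = 1 by omega, lag_succ, lag_zero, linearProfile_zero,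
    linearProfile_of_le D S (by omega : 1 ≤ m + 1) (by omega),
    linearProfile_of_le D S le_rfl (by omega)]
  push_cast
  ring

/-- At `j = 3` the `- S` terms of `linearProfile` cost too much; this profile uses the sharper
bounds `D ≤ g 1` and `3 D ≤ 2 g 2` instead. -/
def threeStepProfile (D : ℝ) (k : ℕ) : ℝ := if k = 0 then 0 else if k = 1 then D else 3 * D / 2

lemma convIncr_threeStepProfile (D : ℝ) : convIncr (threeStepProfile D) 3 = 2 * D ^ 2 := by
  simp only [convIncr, sum_range_succ, range_zero, sum_empty, threeStepProfile, lag]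
  norm_num
  ring

lemma threeStepProfile_monotone {D : ℝ} (hD : 0 ≤ D) : Monotone (threeStepProfile D) := by
  refine monotone_nat_of_le_succ fun k => ?_
  unfold threeStepProfile
  split_ifs <;> simp_all; linarith

lemma linear_step_of_quadratic_le {D S x j : ℝ} (hS : 3 ≤ S) (hD : 12 * S + 10 ≤ D)
    (hj : 4 ≤ j) (hx : 0 ≤ x)
    (h : D / 2 * (D / 2 * (((j - 2) ^ 2 + 3 * (j - 2)) / 2) - (j - 2) * S)
      + (j * D / 2 - S) * (D - S) ≤ x * (x + 1) / 2) :
    (j + 1) * D / 2 - S ≤ x := by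
  by_contra! hlt
  set T := (j + 1) * D / 2 - S with hT
  have hT0 : 0 ≤ T := by nlinarith
  have hsq : x * (x + 1) < T * (T + 1) := by nlinarith
  have hgap : D * S * (j - 1) + (j + 1) * D / 2 ≤ D ^ 2 * (j - 3) / 4 := by
    have e1 : (12 * S + 10) * (j - 3) ≤ D * (j - 3) := by nlinarith
    have e2 : D * ((12 * S + 10) * (j - 3)) / 4 - D * S * (j - 1) - (j + 1) * D / 2
        = D * (2 * (S + 1) * (j - 4)) := by ring
    nlinarith [mul_nonneg (by linarith : (0 : ℝ) ≤ D) (mul_nonneg (by linarith : 0 ≤ 2 * (S + 1))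
      (by linarith : (0 : ℝ) ≤ j - 4))]
  nlinarith [sq_nonneg S]

lemma two_mul_sub_le_of_two_mul_sq_le {D S x : ℝ} (hS : 1 ≤ S) (hx : 0 ≤ x)
    (h : 2 * D ^ 2 ≤ x * (x + 1) / 2) : 2 * D - S ≤ x := by
  by_contra! hlt
  nlinarith [mul_le_mul hlt.le (by linarith : x + 1 ≤ 2 * D) (by linarith) (by linarith)]

lemma linearProfile_le {D S : ℝ} {g : ℕ → ℝ} {j : ℕ} (hg : Monotone g) (hg0 : 0 ≤ g 0)
    (hj : 2 ≤ j) (ih : ∀ k, 1 ≤ k → k < j → ((k : ℝ) + 1) * D / 2 - S ≤ g k) :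
    ∀ k ≤ j, linearProfile D S j k ≤ g k := by
  intro k hk
  rcases Nat.eq_zero_or_pos k with rfl | hk0
  · rwa [linearProfile_zero]
  rcases (show k < j ∨ k = j by omega) with hkj | rfl
  · rw [linearProfile_of_le D S hk0 (by omega)]
    exact ih k hk0 hkj
  · have hprev := ih (k - 1) (by omega) (by omega)
    rw [Nat.cast_sub (by omega), Nat.cast_one, sub_add_cancel] at hprev
    rw [linearProfile_self D S hj]
    exact hprev.trans (hg (Nat.sub_le k 1))

lemma threeStepProfile_le {D : ℝ} {g : ℕ → ℝ} (hg : Monotone g) (hg0 : 0 ≤ g 0)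
    (hg1 : D ≤ g 1) (hg2 : 3 * D ≤ 2 * g 2) : ∀ k ≤ 3, threeStepProfile D k ≤ g k := by
  intro k hk
  have hg23 := hg (by norm_num : 2 ≤ 3)
  interval_cases k <;> simp only [threeStepProfile] <;> norm_num <;> linarith

theorem linear_lower_bound_of_convIncr_le {D S : ℝ} {J : ℕ} {g : ℕ → ℝ} (hS : 3 ≤ S)
    (hD : 12 * S + 10 ≤ D)
    (hg : Monotone g) (hg0 : 0 ≤ g 0) (hg1 : D ≤ g 1) (hg2 : 3 * D ≤ 2 * g 2)
    (hconv : ∀ j, 3 ≤ j → j ≤ J → convIncr g j ≤ g j * (g j + 1) / 2) :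
    ∀ j, 1 ≤ j → j ≤ J → ((j : ℝ) + 1) * D / 2 - S ≤ g j := by
  have hgnn : ∀ k, 0 ≤ g k := fun k => hg0.trans (hg (Nat.zero_le k))
  intro j
  induction j using Nat.strong_induction_on with
  | _ j ih =>
  intro hj1 hjJ
  rcases Nat.lt_or_ge j 4 with hj4 | hj4
  · interval_cases j
    · norm_num; linarith
    · norm_num; linarith
    · have hdom : convIncr (threeStepProfile D) 3 ≤ convIncr g 3 :=
        convIncr_mono (by norm_num) (threeStepProfile_le hg hg0 hg1 hg2) le_rfl hg
        (threeStepProfile_monotone (by linarith))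
      rw [convIncr_threeStepProfile] at hdom
      have h3 := two_mul_sub_le_of_two_mul_sq_le (S := S) (by linarith) (hgnn 3)
        (hdom.trans (hconv 3 le_rfl hjJ))
      norm_num
      linarith
  · have hdom : convIncr (linearProfile D S j) j ≤ convIncr g j :=
      convIncr_mono (by omega)
        (linearProfile_le hg hg0 (by omega) fun k hk1 hkj => ih k hkj hk1 (by omega))
        (linearProfile_nonneg j (by linarith) (by linarith) 0) hg
        (linearProfile_monotone j (by omega) (by linarith) (by linarith))
    rw [convIncr_linearProfile D S (by omega)] at hdom
    exact_mod_cast linear_step_of_quadratic_le hS hD (by exact_mod_cast hj4) (hgnn j)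
      (hdom.trans (hconv j (by omega) hjJ))

section Reachability

variable {α : Type*} (R : α → α → Prop)

def ReachIn : ℕ → α → α → Prop
  | 0, u, w => u = w
  | k + 1, u, w => ∃ z, R u z ∧ ReachIn k z w

def NoShortCycle (t : ℕ) : Prop := ∀ u k, 1 ≤ k → k ≤ t → ¬ ReachIn R k u u

variable {R}

lemma ReachIn.trans {a b : ℕ} {u v w : α} (h₁ : ReachIn R a u v) (h₂ : ReachIn R b v w) :
    ReachIn R (a + b) u w := by
  induction a generalizing u with
  | zero =>
    obtain rfl : u = v := h₁
    simpa using h₂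
  | succ a ih =>
    obtain ⟨z, hz, hzv⟩ := h₁
    rw [Nat.add_right_comm]
    exact ⟨z, hz, ih hzv⟩

lemma ReachIn.snoc {k : ℕ} {u v w : α} (h : ReachIn R k u v) (hvw : R v w) :
    ReachIn R (k + 1) u w :=
  h.trans ⟨w, hvw, rfl⟩

lemma exists_walk_of_reachIn {k : ℕ} {u w : α} (h : ReachIn R k u w) :
    ∃ f : ℕ → α, f 0 = u ∧ f k = w ∧ ∀ i < k, R (f i) (f (i + 1)) := by
  induction k generalizing u with
  | zero => exact ⟨fun _ => u, rfl, h, by simp⟩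
  | succ k ih =>
    obtain ⟨z, huz, hzw⟩ := h
    obtain ⟨f, hf0, hfk, hf⟩ := ih hzw
    refine ⟨fun i => if i = 0 then u else f (i - 1), rfl, by simpa using hfk, fun i hi => ?_⟩
    rcases i with _ | i
    · simpa [hf0] using huz
    · simpa using hf i (by omega)

lemma reachIn_of_walk {f : ℕ → α} {a b : ℕ} (hab : a ≤ b)
    (hf : ∀ i, a ≤ i → i < b → R (f i) (f (i + 1))) : ReachIn R (b - a) (f a) (f b) := by
  induction b, hab using Nat.le_induction with
  | base => simp only [Nat.sub_self]; rfl
  | succ b hab ih =>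
    rw [Nat.sub_add_comm hab]
    exact (ih fun i hai hib => hf i hai (by omega)).snoc (hf b hab (by omega))

lemma exists_shortest_closed_walk {t : ℕ} (h : ¬ NoShortCycle R t) :
    ∃ s, 1 ≤ s ∧ s ≤ t ∧ (∀ m, 1 ≤ m → m < s → ∀ u, ¬ ReachIn R m u u) ∧
      ∃ f : ℕ → α, f s = f 0 ∧ ∀ i < s, R (f i) (f (i + 1)) := by
  classical
  simp only [NoShortCycle, not_forall, not_not] at h
  have hex : ∃ s, 1 ≤ s ∧ s ≤ t ∧ ∃ u, ReachIn R s u u := by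
    obtain ⟨u, k, hk1, hkt, hk⟩ := h
    exact ⟨k, hk1, hkt, u, hk⟩
  obtain ⟨hs1, hst, u, hu⟩ := Nat.find_spec hex
  obtain ⟨f, hf0, hfs, hf⟩ := exists_walk_of_reachIn hu
  refine ⟨Nat.find hex, hs1, hst, fun m hm1 hms v hv => Nat.find_min hex hms ⟨hm1, by omega, v, hv⟩,
    f, hfs.trans hf0.symm, hf⟩

lemma injOn_shortest_closed_walk {β : Type*} {κ : α → β}
    (hκ : ∀ p q r, κ p = κ q → R p r → R q r) {s : ℕ}
    (hmin : ∀ m, 1 ≤ m → m < s → ∀ u, ¬ ReachIn R m u u) {f : ℕ → α} (hfs : f s = f 0)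
    (hf : ∀ i < s, R (f i) (f (i + 1))) : Set.InjOn (κ ∘ f) (Set.Iio s) := by
  intro i hi j hj hkey
  by_contra hne
  -- `f i` also has the out-neighbour `f (j + 1)`, which shortcuts the closed walk.
  wlog hij : i < j generalizing i j
  · exact this hj hi hkey.symm (Ne.symm hne) (by omega)
  simp only [Set.mem_Iio, Function.comp_apply] at hi hj hkey
  have hhead : ReachIn R i (f 0) (f i) := by
    simpa using reachIn_of_walk (Nat.zero_le i) fun m _ hm => hf m (by omega)
  have htail : ReachIn R (s - (j + 1)) (f (j + 1)) (f s) :=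
    reachIn_of_walk (by omega) fun m _ hm => hf m (by omega)
  have hcycle := (hhead.snoc (hκ _ _ _ hkey.symm (hf j hj))).trans htail
  rw [hfs] at hcycle
  exact hmin _ (by omega) (by omega) _ hcycle

lemma rel_val_add_one {s : ℕ} [NeZero s] {f : ℕ → α} (hfs : f s = f 0)
    (hf : ∀ i < s, R (f i) (f (i + 1))) (i : ZMod s) : R (f i.val) (f (i + 1).val) := by
  have hi := ZMod.val_lt i
  rw [ZMod.val_add, ZMod.val_one_eq_one_mod, Nat.add_mod_mod]
  rcases (show i.val + 1 < s ∨ i.val + 1 = s by omega) with h | h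
  · rw [Nat.mod_eq_of_lt h]
    exact hf _ hi
  · rw [h, Nat.mod_self, ← hfs]
    convert hf _ hi using 2
    exact h.symm

end Reachability

section Balls

variable {α : Type*} [Fintype α] (R : α → α → Prop)

open Classical in
def ball (j : ℕ) (u : α) : Finset α := {w | ∃ k ≤ j, ReachIn R k u w}

/-- For irreflexive `R`, `minBall R 1 - 1` is the minimum out-degree. -/
def minBall [Nonempty α] (j : ℕ) : ℕ := univ.inf' univ_nonempty fun u => #(ball R j u)

/-- `0` when `w` is not reachable from `u`. -/
def reachDist (u w : α) : ℕ := sInf {k | ReachIn R k u w}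

variable {R}

lemma mem_ball {j : ℕ} {u w : α} : w ∈ ball R j u ↔ ∃ k ≤ j, ReachIn R k u w := by
  simp [ball]

lemma mem_ball_self (j : ℕ) (u : α) : u ∈ ball R j u := mem_ball.2 ⟨0, Nat.zero_le j, rfl⟩

lemma ball_mono {i j : ℕ} (h : i ≤ j) (u : α) : ball R i u ⊆ ball R j u := fun _ hw =>
  let ⟨k, hk, hr⟩ := mem_ball.1 hw
  mem_ball.2 ⟨k, hk.trans h, hr⟩

lemma mem_ball_trans {a b : ℕ} {u v w : α} (h₁ : v ∈ ball R a u) (h₂ : w ∈ ball R b v) :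
    w ∈ ball R (a + b) u :=
  let ⟨k₁, hk₁, hr₁⟩ := mem_ball.1 h₁
  let ⟨k₂, hk₂, hr₂⟩ := mem_ball.1 h₂
  mem_ball.2 ⟨k₁ + k₂, by omega, hr₁.trans hr₂⟩

lemma mem_ball_iff_reachDist_le {j ℓ : ℕ} {u w : α} (hw : w ∈ ball R j u) :
    w ∈ ball R ℓ u ↔ reachDist R u w ≤ ℓ := by
  obtain ⟨k, -, hk⟩ := mem_ball.1 hw
  have hreach : ReachIn R (reachDist R u w) u w := Nat.sInf_mem (s := {k | ReachIn R k u w}) ⟨k, hk⟩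
  refine ⟨fun h => ?_, fun h => mem_ball.2 ⟨_, h, hreach⟩⟩
  obtain ⟨k', hk', hr⟩ := mem_ball.1 h
  exact (Nat.sInf_le hr).trans hk'

lemma notMem_ball_of_mem_ball {t a b : ℕ} (hR : NoShortCycle R t) (hab : a + b ≤ t) {u w : α}
    (hne : u ≠ w) (h : w ∈ ball R a u) : u ∉ ball R b w := fun h' => by
  obtain ⟨k₁, hk₁, hr₁⟩ := mem_ball.1 h
  obtain ⟨k₂, hk₂, hr₂⟩ := mem_ball.1 h'
  have hpos : 1 ≤ k₁ := Nat.one_le_iff_ne_zero.2 fun h0 => hne (by subst h0; exact hr₁)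
  exact hR u (k₁ + k₂) (by omega) (by omega) (hr₁.trans hr₂)

/-- Without short cycles, `w` lies in the ball around `u` and `u` in the ball around `w` only for
`u = w`, so the pairs counted on the left inject into the unordered pairs of `T`. -/
lemma sum_card_ball_inter_le [DecidableEq α] {t : ℕ} (hR : NoShortCycle R t) (T : Finset α)
    (ρ : α → ℕ) (hρ : ∀ u ∈ T, ∀ w ∈ T, ρ u + ρ w ≤ t) :
    ∑ u ∈ T, #(ball R (ρ u) u ∩ T) ≤ (#T + 1).choose 2 := by
  rw [← card_sym2, ← card_sigma]
  refine card_le_card_of_injOn (fun x => s(x.1, x.2)) (fun x hx => ?_) ?_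
  · simp only [mem_coe, mem_sigma, mem_inter] at hx
    exact mk_mem_sym2_iff.2 ⟨hx.1, hx.2.2⟩
  · rintro ⟨a, b⟩ hab ⟨c, d⟩ hcd h
    simp only [mem_coe, mem_sigma, mem_inter] at hab hcd
    rcases Sym2.eq_iff.1 h with ⟨rfl, rfl⟩ | ⟨rfl, rfl⟩
    · rfl
    · by_cases hne : a = b
      · subst hne; rfl
      · exact absurd hcd.2.1 (notMem_ball_of_mem_ball hR (hρ _ hab.1 _ hcd.1) hne hab.2.1)

end Balls

lemma two_mul_choose_two_succ (n : ℕ) : 2 * (n + 1).choose 2 = (n + 1) * n := by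
  have h := Nat.add_one_mul_choose_eq n 1
  rw [Nat.choose_one_right] at h
  rw [h, mul_comm]

section MinBall

variable {α : Type*} [Fintype α] [Nonempty α] {R : α → α → Prop}

lemma minBall_le_card_ball (j : ℕ) (u : α) : minBall R j ≤ #(ball R j u) :=
  inf'_le _ (mem_univ u)

lemma exists_card_ball_eq_minBall (j : ℕ) : ∃ u : α, #(ball R j u) = minBall R j :=
  let ⟨u, _, hu⟩ := exists_mem_eq_inf' univ_nonempty fun u => #(ball R j u)
  ⟨u, hu.symm⟩

lemma minBall_mono : Monotone (minBall R) := fun i j hij =>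
  let ⟨u, hu⟩ := exists_card_ball_eq_minBall (R := R) j
  hu ▸ (minBall_le_card_ball i u).trans (card_le_card (ball_mono hij u))

/-- Around a vertex `x` minimising `#(ball R j x)`, each `u` at distance `d` from `x` has the ball
of radius `j - d` inside `ball R j x`; counting these balls layer by layer gives the lower bound,
and the absence of short cycles the upper bound. -/
lemma convIncr_minBall_le {t j : ℕ} (hR : NoShortCycle R t) (h2j : 2 * j ≤ t) :
    convIncr (fun i => (minBall R i : ℝ)) j ≤ minBall R j * (minBall R j + 1) / 2 := by
  classical
  obtain ⟨x, hx⟩ := exists_card_ball_eq_minBall (R := R) j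
  set g : ℕ → ℝ := fun i => (minBall R i : ℝ)
  set T := ball R j x
  set c : ℕ → ℝ := fun ℓ => (#{u ∈ T | reachDist R x u ≤ ℓ} : ℝ)
  have hd : ∀ u ∈ T, reachDist R x u ≤ j := fun u hu => (mem_ball_iff_reachDist_le hu).1 hu
  have hc : ∀ ℓ ≤ j, g ℓ ≤ c ℓ := by
    intro ℓ hℓ
    have hlayer : {u ∈ T | reachDist R x u ≤ ℓ} = ball R ℓ x := by
      ext u
      simp only [mem_filter]
      refine ⟨fun ⟨hu, h⟩ => (mem_ball_iff_reachDist_le hu).2 h, fun h => ?_⟩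
      have hu := ball_mono hℓ x h
      exact ⟨hu, (mem_ball_iff_reachDist_le hu).1 h⟩
    simp only [g, c, hlayer]
    exact_mod_cast minBall_le_card_ball ℓ x
  have hsub : ∀ u ∈ T, ball R (j - reachDist R x u) u ⊆ T := fun u hu w hw =>
    ball_mono (by have := hd u hu; omega) x
      (mem_ball_trans ((mem_ball_iff_reachDist_le hu).2 le_rfl) hw)
  have hpairs : ∑ u ∈ T, #(ball R (j - reachDist R x u) u) ≤ (#T + 1).choose 2 := by
    have h := sum_card_ball_inter_le hR T (fun u => j - reachDist R x u) fun u _ w _ => by omega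
    rwa [sum_congr rfl fun u hu => by rw [inter_eq_left.2 (hsub u hu)]] at h
  have hg : Monotone g := fun a b h => show (minBall R a : ℝ) ≤ minBall R b by
    exact_mod_cast minBall_mono h
  calc convIncr g j
      ≤ ∑ ℓ ∈ range (j + 1), c ℓ * (g (j - ℓ) - lag g (j - ℓ)) :=
        sum_le_sum fun ℓ hℓ => mul_le_mul_of_nonneg_right (hc ℓ (by simp at hℓ; omega))
          (sub_nonneg.2 (lag_le hg (Nat.cast_nonneg _) _))
    _ = ∑ ℓ ∈ range (j + 1), (c ℓ - lag c ℓ) * g (j - ℓ) := (sum_sub_lag_mul_eq c g j).symm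
    _ = ∑ u ∈ T, g (j - reachDist R x u) :=
        (sum_comp_eq_sum_sub_lag T (reachDist R x) hd fun ℓ => g (j - ℓ)).symm
    _ ≤ ∑ u ∈ T, (#(ball R (j - reachDist R x u) u) : ℝ) :=
        sum_le_sum fun u _ => show (minBall R _ : ℝ) ≤ _ by exact_mod_cast minBall_le_card_ball _ u
    _ ≤ ((#T + 1).choose 2 : ℕ) := by exact_mod_cast hpairs
    _ = minBall R j * (minBall R j + 1) / 2 := by
        rw [Nat.cast_choose_two, hx]
        push_cast
        ring

lemma two_mul_minBall_le_card_add_one {t J : ℕ} (hR : NoShortCycle R t) (hJ : 2 * J ≤ t) :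
    2 * minBall R J ≤ Fintype.card α + 1 := by
  classical
  have hpairs := sum_card_ball_inter_le hR univ (fun _ => J) fun _ _ _ _ => by omega
  simp only [inter_univ, card_univ] at hpairs
  have hsum : Fintype.card α * minBall R J ≤ ∑ u, #(ball R J u) := by
    rw [← card_univ, ← smul_eq_mul, ← sum_const]
    exact sum_le_sum fun u _ => minBall_le_card_ball J u
  refine Nat.le_of_mul_le_mul_left ?_ (Fintype.card_pos (α := α))
  nlinarith [two_mul_choose_two_succ (Fintype.card α)]

/-- For `x` minimising `#(ball R 2 x)`, the out-neighbours `u ≠ x` of `x` send all their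
out-edges into `ball R 2 x \ {x}`, and without 2-cycles at most half of the pairs among them are
edges. -/
lemma three_mul_minBall_one_le {t : ℕ} (hR : NoShortCycle R t) (ht : 2 ≤ t)
    (hD : 2 ≤ minBall R 1) : 3 * minBall R 1 ≤ 2 * minBall R 2 := by
  classical
  obtain ⟨x, hx⟩ := exists_card_ball_eq_minBall (R := R) 2
  set D := minBall R 1
  set S := (ball R 1 x).erase x
  set B := (ball R 2 x).erase x
  have hSB : S ⊆ B := erase_subset_erase x (ball_mono one_le_two x)
  have hball : ∀ u ∈ S, ball R 1 u ⊆ B := by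
    intro u hu w hw
    have hux := mem_of_mem_erase hu
    refine mem_erase.2 ⟨?_, mem_ball_trans hux hw⟩
    rintro rfl
    exact notMem_ball_of_mem_ball hR ht (ne_of_mem_erase hu).symm hux hw
  have hDS : D ≤ #S + 1 := by
    rw [card_erase_of_mem (mem_ball_self 1 x),
      Nat.sub_add_cancel (card_pos.2 ⟨x, mem_ball_self 1 x⟩)]
    exact minBall_le_card_ball 1 x
  have hB : #B + 1 = minBall R 2 := by
    rw [card_erase_of_mem (mem_ball_self 2 x),
      Nat.sub_add_cancel (card_pos.2 ⟨x, mem_ball_self 2 x⟩), hx]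
  have hdeg : ∀ u ∈ S, D ≤ #(ball R 1 u ∩ S) + (#B - #S) := by
    intro u hu
    have hout : #(ball R 1 u \ S) ≤ #B - #S := by
      rw [← card_sdiff_of_subset hSB]
      exact card_le_card (sdiff_subset_sdiff (hball u hu) le_rfl)
    have := card_inter_add_card_sdiff (ball R 1 u) S
    have := minBall_le_card_ball (R := R) 1 u
    omega
  have hsum : #S * D ≤ (#S + 1).choose 2 + #S * (#B - #S) :=
    calc #S * D = ∑ _u ∈ S, D := by rw [sum_const, smul_eq_mul]
      _ ≤ ∑ u ∈ S, (#(ball R 1 u ∩ S) + (#B - #S)) := sum_le_sum hdeg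
      _ = ∑ u ∈ S, #(ball R 1 u ∩ S) + #S * (#B - #S) := by
          rw [sum_add_distrib, sum_const, smul_eq_mul]
      _ ≤ (#S + 1).choose 2 + #S * (#B - #S) := by
          gcongr
          exact sum_card_ball_inter_le hR S (fun _ => 1) fun _ _ _ _ => by omega
  obtain ⟨m, hm⟩ : ∃ m, #B = #S + m := ⟨#B - #S, by have := card_le_card hSB; omega⟩
  rw [hm, Nat.add_sub_cancel_left] at hsum
  have hcancel : #S * (2 * D) ≤ #S * (#S + 1 + 2 * m) := by
    nlinarith [two_mul_choose_two_succ #S]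
  have := Nat.le_of_mul_le_mul_left hcancel (by omega)
  omega

/-- Up to radius `t / 2` the smallest ball grows by about `minBall R 1 / 2` per step, while a
ball of radius `t / 2` contains at most about half of the vertices. -/
theorem add_one_mul_minBall_one_le {t : ℕ} (hR : NoShortCycle R t) (ht : 2 ≤ t)
    (hD : 12 * (t + 1) + 10 ≤ minBall R 1) :
    (t / 2 + 1) * minBall R 1 ≤ Fintype.card α + 2 * (t + 1) + 1 := by
  have hS : (3 : ℝ) ≤ t + 1 := by
    have : (2 : ℝ) ≤ t := by exact_mod_cast ht
    linarith
  have hgrowth := linear_lower_bound_of_convIncr_le (D := minBall R 1) (S := t + 1) (J := t / 2)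
    (g := fun i => (minBall R i : ℝ)) hS
    (by exact_mod_cast hD) (fun a b h => show (minBall R a : ℝ) ≤ minBall R b by
      exact_mod_cast minBall_mono h) (Nat.cast_nonneg _) le_rfl
    (by exact_mod_cast three_mul_minBall_one_le hR ht (by omega))
    (fun j _ hj => convIncr_minBall_le hR (by omega)) (t / 2) (by omega) le_rfl
  have hcount : (2 * minBall R (t / 2) : ℝ) ≤ Fintype.card α + 1 := by
    exact_mod_cast two_mul_minBall_le_card_add_one hR (by omega)
  have hreal : ((t / 2 + 1 : ℕ) * minBall R 1 : ℝ) ≤ Fintype.card α + 2 * (t + 1) + 1 := by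
    push_cast at hgrowth ⊢
    linarith
  exact_mod_cast hreal

end MinBall

section PairDigraph

variable {V : Type*} [DecidableEq V] (E : Set (Finset V))

def PairAdj (p q : {p : V × V // p.1 ≠ p.2}) : Prop :=
  ({p.1.1, p.1.2, q.1.1} : Finset V) ∈ E ∧ ({p.1.1, p.1.2, q.1.2} : Finset V) ∈ E

variable {E}

lemma ne_of_insert_insert_mem (hE : ∀ e ∈ E, #e = 3) {x y z : V}
    (h : ({x, y, z} : Finset V) ∈ E) : z ≠ x := by
  rintro rfl
  have h3 := hE _ h
  rw [insert_eq_of_mem (by simp)] at h3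
  exact absurd h3 (card_le_two.trans_lt (by norm_num)).ne

lemma not_pairAdj_self (hE : ∀ e ∈ E, #e = 3) (p : {p : V × V // p.1 ≠ p.2}) :
    ¬ PairAdj E p p :=
  fun h => ne_of_insert_insert_mem hE h.1 rfl

lemma PairAdj.of_pair_eq {p q r : {p : V × V // p.1 ≠ p.2}}
    (hpq : ({p.1.1, p.1.2} : Finset V) = {q.1.1, q.1.2}) (h : PairAdj E p r) : PairAdj E q r := by
  have key : ∀ z, ({q.1.1, q.1.2, z} : Finset V) = {p.1.1, p.1.2, z} := fun z => by
    ext w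
    have := Finset.ext_iff.1 hpq w
    simp only [mem_insert, mem_singleton] at this ⊢
    tauto
  rw [PairAdj, key, key]
  exact h

lemma exists_ring_of_not_noShortCycle (hE : ∀ e ∈ E, #e = 3) {t : ℕ}
    (h : ¬ NoShortCycle (PairAdj E) t) :
    ∃ s : ℕ, 2 ≤ s ∧ s ≤ t ∧
      ∃ u v : ZMod s → V,
        (∀ i, u i ≠ v i) ∧
        (∀ i j : ZMod s, i ≠ j → ({u i, v i} : Finset V) ≠ ({u j, v j} : Finset V)) ∧
        (∀ i : ZMod s, ({u i, v i, u (i + 1)} : Finset V) ∈ E ∧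
          ({u i, v i, v (i + 1)} : Finset V) ∈ E) := by
  obtain ⟨s, hs1, hst, hmin, f, hfs, hf⟩ := exists_shortest_closed_walk h
  have hs2 : 2 ≤ s := by
    by_contra hlt
    obtain rfl : s = 1 := by omega
    exact not_pairAdj_self hE _ (hfs ▸ hf 0 one_pos)
  have : NeZero s := ⟨by omega⟩
  have hinj := injOn_shortest_closed_walk (κ := fun p => ({p.1.1, p.1.2} : Finset V))
    (fun _ _ _ => PairAdj.of_pair_eq) hmin hfs hf
  refine ⟨s, hs2, hst, fun i => (f i.val).1.1, fun i => (f i.val).1.2, fun i => (f i.val).2,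
    fun i j hij => ?_, rel_val_add_one hfs hf⟩
  exact fun h => (ZMod.val_injective s).ne hij (hinj (ZMod.val_lt i) (ZMod.val_lt j) h)

variable [Fintype V]

lemma card_offDiag_lt_card_ball_one (hE : ∀ e ∈ E, #e = 3) (p : {p : V × V // p.1 ≠ p.2})
    {N : Finset V} (hN : ∀ z ∈ N, ({p.1.1, p.1.2, z} : Finset V) ∈ E) :
    #N.offDiag < #(ball (PairAdj E) 1 p) := by
  set P := N.offDiag.subtype fun q : V × V => q.1 ≠ q.2
  have hP : #P = #N.offDiag := by
    rw [card_subtype, filter_true_of_mem fun q hq => (mem_offDiag.1 hq).2.2]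
  have hp : p ∉ P := fun h => by
    rw [mem_subtype, mem_offDiag] at h
    exact ne_of_insert_insert_mem hE (hN _ h.1) rfl
  have hPball : insert p P ⊆ ball (PairAdj E) 1 p := by
    refine insert_subset (mem_ball_self 1 p) fun q hq => mem_ball.2 ⟨1, le_rfl, q, ?_, rfl⟩
    rw [mem_subtype, mem_offDiag] at hq
    exact ⟨hN _ hq.1, hN _ hq.2.1⟩
  calc #N.offDiag < #(insert p P) := by rw [card_insert_of_notMem hp, hP]; omega
    _ ≤ _ := card_le_card hPball

lemma card_pairs_le : Fintype.card {p : V × V // p.1 ≠ p.2} ≤ Fintype.card V ^ 2 := by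
  rw [sq, ← Fintype.card_prod]
  exact Fintype.card_subtype_le _

end PairDigraph

lemma two_mul_sq_le_of_le_mul {t n m : ℕ} (ht : 0 < t) (h : √2 / √t * n ≤ m) :
    2 * n ^ 2 ≤ t * m ^ 2 := by
  have htR : (0 : ℝ) < t := by exact_mod_cast ht
  have hsq := pow_le_pow_left₀ (by positivity) h 2
  rw [mul_pow, div_pow, Real.sq_sqrt zero_le_two, Real.sq_sqrt htR.le, div_mul_eq_mul_div,
    div_le_iff₀ htR] at hsq
  exact_mod_cast (by linarith : (2 : ℝ) * n ^ 2 ≤ t * m ^ 2)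

lemma five_mul_add_seven_le_of_sq_le {t n m : ℕ} (hn : 100 * (t + 2) ^ 2 ≤ n)
    (h : 2 * n ^ 2 ≤ t * m ^ 2) : 5 * t + 7 ≤ m := by
  by_contra! hm
  have hm' : m ≤ 5 * t + 6 := by omega
  have h1 : t * m ^ 2 ≤ t * (5 * t + 6) ^ 2 := Nat.mul_le_mul_left t (Nat.pow_le_pow_left hm' 2)
  have h2 : (100 * (t + 2) ^ 2) ^ 2 ≤ n ^ 2 := Nat.pow_le_pow_left hn 2
  nlinarith

lemma twelve_mul_add_le_of_sq_sub_lt {t m D : ℕ} (hm : 5 * t + 7 ≤ m) (hmD : m * m - m < D) :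
    12 * (t + 1) + 10 ≤ D := by
  have : 7 * m ≤ m * m := Nat.mul_le_mul_right m (by omega)
  omega

lemma not_div_two_add_one_mul_le {t n m D N : ℕ} (hm : 5 * t + 7 ≤ m) (hmD : m * m - m < D)
    (hnm : 2 * n ^ 2 ≤ t * m ^ 2) (hN : N ≤ n ^ 2) : ¬ (t / 2 + 1) * D ≤ N + 2 * (t + 1) + 1 := by
  intro h
  have hmD' : m * m < D + m := by
    have : m ≤ m * m := Nat.le_mul_self m
    omega
  have ht : t + 1 ≤ 2 * (t / 2 + 1) := by omega
  have h1 : (t + 1) * D ≤ 2 * n ^ 2 + 4 * t + 6 := by nlinarith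
  have h2 : (t + 1) * (m * m + 1) ≤ (t + 1) * (D + m) := Nat.mul_le_mul_left _ hmD'
  nlinarith

end CodegreeRing

end

open CodegreeRing

/-- If every pair of distinct vertices of a 3-graph `G` on `n` vertices has co-degree at
least `(√2/√t + ε)·n`, with `n` sufficiently large, then `G` contains a degenerate ring:
pairwise distinct pairs `{u_i, v_i}` (for `i` mod `s`, some `2 ≤ s ≤ t`) such that
`{u_i, v_i, u_{i+1}}` and `{u_i, v_i, v_{i+1}}` are edges for all `i`. -/
theorem codegree_ring (t : ℕ) (ht : 2 ≤ t) (ε : ℝ) (hε : 0 < ε) :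
    ∃ n0 : ℕ, ∀ (V : Type) [Fintype V] [DecidableEq V] (n : ℕ),
      n = Fintype.card V → n0 ≤ n →
      ∀ E : Set (Finset V), (∀ e ∈ E, e.card = 3) →
      (∀ x y : V, x ≠ y →
        (Real.sqrt 2 / Real.sqrt t + ε) * n ≤ ({z : V | ({x, y, z} : Finset V) ∈ E}.ncard : ℝ)) →
      ∃ s : ℕ, 2 ≤ s ∧ s ≤ t ∧
        ∃ u v : ZMod s → V,
          (∀ i, u i ≠ v i) ∧
          (∀ i j : ZMod s, i ≠ j → ({u i, v i} : Finset V) ≠ ({u j, v j} : Finset V)) ∧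
          (∀ i : ZMod s, ({u i, v i, u (i + 1)} : Finset V) ∈ E ∧
            ({u i, v i, v (i + 1)} : Finset V) ∈ E) := by
  classical
  refine ⟨100 * (t + 2) ^ 2, fun V _ _ n hn hn0 E hE hco => ?_⟩
  by_contra hring
  have hR : NoShortCycle (PairAdj E) t := not_not.1 (mt (exists_ring_of_not_noShortCycle hE) hring)
  obtain ⟨a, b, hab⟩ := Fintype.exists_pair_of_one_lt_card (α := V) (by nlinarith)
  have : Nonempty {p : V × V // p.1 ≠ p.2} := ⟨⟨(a, b), hab⟩⟩
  obtain ⟨p, hp⟩ := exists_card_ball_eq_minBall (R := PairAdj E) 1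
  set N : Finset V := {z | ({p.1.1, p.1.2, z} : Finset V) ∈ E}
  have hcod : √2 / √t * n ≤ #N := by
    have h := hco p.1.1 p.1.2 p.2
    rw [Set.ncard_eq_toFinset_card', Set.toFinset_ofPred] at h
    nlinarith [mul_nonneg hε.le (Nat.cast_nonneg n)]
  have hsq := two_mul_sq_le_of_le_mul (by omega) hcod
  have hm := five_mul_add_seven_le_of_sq_le hn0 hsq
  have hdeg : #N * #N - #N < minBall (PairAdj E) 1 := by
    rw [← hp, ← offDiag_card]
    exact card_offDiag_lt_card_ball_one hE p fun z hz => (mem_filter.1 hz).2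
  exact not_div_two_add_one_mul_le hm hdeg hsq (hn ▸ card_pairs_le)
    (add_one_mul_minBall_one_le hR ht (twelve_mul_add_le_of_sq_sub_lt hm hdeg))
end

section
/- Let G be a 3-uniform hypergraph on n vertices with minimum co-degree at least ⌊n/2⌋ + 1, and suppose G contains a copy of the 2-blowup R_t(2) of the ring R_t for some t. Then there exists a vertex u* of G and an edge {x, y, z} of R_t such that, denoting by v, v' the two clones in R_t(2) of each vertex v of R_t, u* lies in N(x,x') ∩ N(y,y') ∩ N(z,z'). Consequently G contains a copy of the 3-graph F* obtained from the complete 3-partite 3-graph with parts {x,x'}, {y,y'}, {z,z'} by adding a vertex u and the three edges uxx', uyy', uzz'. -/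
open Finset

/-- Any `t+1` vertices of the ring `R_t` contain an edge. -/
lemma ring_edge_in_big_set (t : ℕ) (ht : 2 ≤ t) (S : Finset (ZMod t × Bool))
    (hS : t + 1 ≤ S.card) :
    ∃ i b, (i, false) ∈ S ∧ (i, true) ∈ S ∧ (i + 1, b) ∈ S := by
  haveI : NeZero t := ⟨by omega⟩
  classical
  set O := S.image Prod.fst with hO
  set D := Finset.univ.filter (fun i : ZMod t => (i, false) ∈ S ∧ (i, true) ∈ S) with hD
  have hfib : ∀ i : ZMod t, (S.filter (fun p => p.1 = i)).card ≤ if i ∈ D then 2 else 1 := by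
    intro i
    by_cases hiD : i ∈ D
    · simp only [hiD, if_true]
      have hsub : S.filter (fun p => p.1 = i) ⊆ {(i, false), (i, true)} := by
        intro p hp
        rcases p with ⟨pi, pb⟩
        simp only [Finset.mem_filter] at hp
        cases pb <;> simp_all
      calc (S.filter (fun p => p.1 = i)).card ≤ ({(i, false), (i, true)} : Finset _).card :=
            Finset.card_le_card hsub
        _ ≤ 2 := (Finset.card_insert_le _ _).trans (by simp)
    · simp only [hiD, if_false]
      simp only [hD, Finset.mem_filter, Finset.mem_univ, true_and, not_and] at hiD
      by_cases hf : (i, false) ∈ S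
      · have hsub : S.filter (fun p => p.1 = i) ⊆ {(i, false)} := by
          intro p hp
          rcases p with ⟨pi, pb⟩
          simp only [Finset.mem_filter] at hp
          obtain ⟨hpS, rfl⟩ := hp
          cases pb
          · simp
          · exact absurd hpS (hiD hf)
        simpa using Finset.card_le_card hsub
      · have hsub : S.filter (fun p => p.1 = i) ⊆ {(i, true)} := by
          intro p hp
          rcases p with ⟨pi, pb⟩
          simp only [Finset.mem_filter] at hp
          obtain ⟨hpS, rfl⟩ := hp
          cases pb
          · exact absurd hpS hf
          · simp
        simpa using Finset.card_le_card hsub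
  have hcard : S.card ≤ O.card + D.card := by
    have h1 : S.card = ∑ i ∈ O, (S.filter (fun p => p.1 = i)).card :=
      Finset.card_eq_sum_card_fiberwise (fun p hp => Finset.mem_image_of_mem _ hp)
    have h2 : ∑ i ∈ O, (S.filter (fun p => p.1 = i)).card
        ≤ ∑ i ∈ O, ((1 : ℕ) + if i ∈ D then 1 else 0) := by
      apply Finset.sum_le_sum
      intro i _
      have := hfib i
      split at this <;> split <;> omega
    have h3 : ∑ i ∈ O, ((1 : ℕ) + if i ∈ D then 1 else 0)
        = O.card + (O.filter (fun i => i ∈ D)).card := by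
      rw [Finset.sum_add_distrib, ← Finset.card_filter]
      simp
    have h4 : (O.filter (fun i => i ∈ D)).card ≤ D.card :=
      Finset.card_le_card (by intro i hi; exact (Finset.mem_filter.mp hi).2)
    omega
  suffices hsuff : ∃ i ∈ D, i + 1 ∈ O by
    obtain ⟨i, hiD, hiO⟩ := hsuff
    simp only [hD, Finset.mem_filter, Finset.mem_univ, true_and] at hiD
    rw [hO, Finset.mem_image] at hiO
    obtain ⟨p, hpS, hp1⟩ := hiO
    refine ⟨i, p.2, hiD.1, hiD.2, ?_⟩
    have : (i + 1, p.2) = p := by rw [← hp1]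
    rwa [this]
  by_contra hcon
  push_neg at hcon
  have hdisj : Disjoint (D.image (· + 1)) O := by
    rw [Finset.disjoint_left]
    intro j hj hjO
    rw [Finset.mem_image] at hj
    obtain ⟨i, hiD, rfl⟩ := hj
    exact hcon i hiD hjO
  have himg : (D.image (· + 1)).card = D.card :=
    Finset.card_image_of_injective _ (add_left_injective 1)
  have hle : (D.image (· + 1)).card + O.card ≤ t := by
    have := Finset.card_le_card (Finset.subset_univ ((D.image (· + 1)) ∪ O))
    rw [Finset.card_union_of_disjoint hdisj, Finset.card_univ, ZMod.card] at this
    exact this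
  omega

/-- If a 3-graph `G` on `n` vertices has minimum co-degree at least `⌊n/2⌋ + 1` and
contains a copy (given by the injection `c`) of the 2-blowup `R_t(2)` of the ring `R_t`,
then there are a vertex `u*` and an edge `{x_i, y_i, (i+1, b)}` of `R_t` such that `u*`
lies in the co-neighborhood of the two clones of each of the three vertices of that edge;
consequently `G` contains a copy of `F*` (the complete 3-partite 3-graph on the three
pairs of clones together with `u*` and the three edges joining `u*` to each pair). -/
theorem codegree_blowup_ring_gives_Fstar (t n : ℕ) (ht : 2 ≤ t)
    (V : Type) [Fintype V] [DecidableEq V] (hn : Fintype.card V = n)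
    (E : Set (Finset V)) (hunif : ∀ e ∈ E, e.card = 3)
    (hcodeg : ∀ x y : V, x ≠ y →
      n / 2 + 1 ≤ ({z : V | ({x, y, z} : Finset V) ∈ E}.ncard))
    (c : (ZMod t × Bool) × Fin 2 → V) (hc : Function.Injective c)
    (hcopy : ∀ (i : ZMod t) (b : Bool) (j k l : Fin 2),
      ({c ((i, false), j), c ((i, true), k), c ((i + 1, b), l)} : Finset V) ∈ E) :
    ∃ (u : V) (i : ZMod t) (b : Bool),
      ({c ((i, false), 0), c ((i, false), 1), u} : Finset V) ∈ E ∧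
      ({c ((i, true), 0), c ((i, true), 1), u} : Finset V) ∈ E ∧
      ({c ((i + 1, b), 0), c ((i + 1, b), 1), u} : Finset V) ∈ E ∧
      (∀ j k l : Fin 2,
        ({c ((i, false), j), c ((i, true), k), c ((i + 1, b), l)} : Finset V) ∈ E) ∧
      (∀ (w : ZMod t × Bool) (j : Fin 2),
        (w = (i, false) ∨ w = (i, true) ∨ w = (i + 1, b)) → u ≠ c (w, j)) := by
  classical
  haveI : NeZero t := ⟨by omega⟩
  -- co-neighborhood of the pair of clones of v
  set N : ZMod t × Bool → Finset V :=
    fun v => Finset.univ.filter (fun z => ({c (v, 0), c (v, 1), z} : Finset V) ∈ E) with hN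
  have hNcard : ∀ v, n / 2 + 1 ≤ (N v).card := by
    intro v
    have hne : c (v, 0) ≠ c (v, 1) := fun h => by
      have := hc h; simp at this
    have := hcodeg (c (v, 0)) (c (v, 1)) hne
    have heq : ({z : V | ({c (v, 0), c (v, 1), z} : Finset V) ∈ E}.ncard) = (N v).card := by
      rw [Set.ncard_eq_toFinset_card']
      congr 1
      ext z
      simp [hN]
    omega
  -- double counting
  have hsum1 : (2 * t) * (n / 2 + 1) ≤ ∑ v : ZMod t × Bool, (N v).card := by
    have := Finset.card_nsmul_le_sum Finset.univ (fun v => (N v).card) (n / 2 + 1)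
      (fun v _ => hNcard v)
    simpa [Finset.card_univ, ZMod.card, mul_comm, smul_eq_mul] using this
  have hswap : ∑ v : ZMod t × Bool, (N v).card
      = ∑ u : V, (Finset.univ.filter (fun v : ZMod t × Bool => u ∈ N v)).card := by
    simp only [hN, Finset.card_filter, Finset.mem_filter, Finset.mem_univ, true_and]
    exact Finset.sum_comm
  have hex : ∃ u : V, t + 1 ≤ (Finset.univ.filter (fun v : ZMod t × Bool => u ∈ N v)).card := by
    by_contra hcon
    push_neg at hcon
    have hub : ∑ u : V, (Finset.univ.filter (fun v : ZMod t × Bool => u ∈ N v)).card ≤ n * t := by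
      calc ∑ u : V, (Finset.univ.filter (fun v : ZMod t × Bool => u ∈ N v)).card
          ≤ ∑ _u : V, t := Finset.sum_le_sum (fun u _ => by have := hcon u; omega)
        _ = n * t := by rw [Finset.sum_const, Finset.card_univ, hn, smul_eq_mul]
    rw [hswap] at hsum1
    have h2 : n ≤ 2 * (n / 2) + 1 := by omega
    nlinarith [hsum1, hub, Nat.div_le_self n 2]
  obtain ⟨u, hu⟩ := hex
  obtain ⟨i, b, h1, h2, h3⟩ := ring_edge_in_big_set t ht _ hu
  simp only [Finset.mem_filter, Finset.mem_univ, true_and, hN] at h1 h2 h3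
  refine ⟨u, i, b, h1, h2, h3, fun j k l => hcopy i b j k l, ?_⟩
  intro w j hw heq
  have hedge : ({c (w, 0), c (w, 1), u} : Finset V) ∈ E := by
    rcases hw with rfl | rfl | rfl
    · exact h1
    · exact h2
    · exact h3
  have h3c := hunif _ hedge
  have hle2 : ({c (w, 0), c (w, 1), u} : Finset V).card ≤ 2 := by
    have hsub : ({c (w, 0), c (w, 1), u} : Finset V) ⊆ {c (w, 0), c (w, 1)} := by
      intro x hx
      simp only [Finset.mem_insert, Finset.mem_singleton] at hx ⊢
      rcases hx with rfl | rfl | rfl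
      · left; rfl
      · right; rfl
      · fin_cases j
        · left; exact heq
        · right; exact heq
    exact (Finset.card_le_card hsub).trans
      ((Finset.card_insert_le _ _).trans (by simp))
  omega
end

section
/- The half-graph-type 3-graph G_n contains no copy of any ring R_t for any t ≥ 2. -/
/-- The vertex set of the half-graph-type 3-graph `G_n`. -/
abbrev halfV (n : ℕ) := Fin (n / 2) ⊕ Fin ((n + 1) / 2)

/-- The edge set of `G_n`: all triples `{a_i, b_j, a_k}` and `{a_i, b_j, b_k}` with
`i < k` and `j < k`. -/
def halfEdges (n : ℕ) : Set (Finset (halfV n)) :=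
  {e | ∃ (i : Fin (n / 2)) (j : Fin ((n + 1) / 2)),
      (∃ k : Fin (n / 2), (i : ℕ) < (k : ℕ) ∧ (j : ℕ) < (k : ℕ) ∧
        e = {Sum.inl i, Sum.inr j, Sum.inl k}) ∨
      (∃ k : Fin ((n + 1) / 2), (i : ℕ) < (k : ℕ) ∧ (j : ℕ) < (k : ℕ) ∧
        e = {Sum.inl i, Sum.inr j, Sum.inr k})}

/-- The side of a vertex of `G_n`: `false` for `A`, `true` for `B`. -/
private def sideH {n : ℕ} : halfV n → Bool := Sum.isRight

/-- The rank (index) of a vertex of `G_n`. -/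
private def rkH {n : ℕ} : halfV n → ℕ := Sum.elim Fin.val Fin.val

private lemma boolAux : ∀ a b c : Bool, a ≠ c → b ≠ c → a = b := by decide

/-- Structure of an edge of `G_n`: one of the three vertices is an "apex" of strictly
largest rank, and the other two lie on opposite sides. -/
private lemma coreLem {n : ℕ} (u v w : halfV n) (huv : u ≠ v) (huw : u ≠ w) (hvw : v ≠ w)
    (h : ({u, v, w} : Finset (halfV n)) ∈ halfEdges n) :
    (sideH u ≠ sideH v ∧ rkH u < rkH w ∧ rkH v < rkH w) ∨
    (sideH u ≠ sideH w ∧ rkH u < rkH v ∧ rkH w < rkH v) ∨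
    (sideH v ≠ sideH w ∧ rkH v < rkH u ∧ rkH w < rkH u) := by
  obtain ⟨i, j, h | h⟩ := h <;> obtain ⟨k, hik, hjk, he⟩ := h <;>
  · have hu : u ∈ ({u, v, w} : Finset (halfV n)) := by simp
    have hv : v ∈ ({u, v, w} : Finset (halfV n)) := by simp
    have hw : w ∈ ({u, v, w} : Finset (halfV n)) := by simp
    rw [he] at hu hv hw
    simp only [Finset.mem_insert, Finset.mem_singleton] at hu hv hw
    rcases hu with hu | hu | hu <;> rcases hv with hv | hv | hv <;>
      rcases hw with hw | hw | hw <;> subst_vars <;>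
      simp_all [sideH, rkH]

section Main

variable {n t : ℕ} (f : ZMod t × Bool → halfV n)

/-- Local abbreviation: max rank at level `i`. -/
private def Tf (f : ZMod t × Bool → halfV n) (i : ZMod t) : ℕ :=
  max (rkH (f (i, false))) (rkH (f (i, true)))

private lemma Dlem (ht : 2 ≤ t) (hf : Function.Injective f)
    (hedge : ∀ (i : ZMod t) (b : Bool),
      ({f (i, false), f (i, true), f (i + 1, b)} : Finset (halfV n)) ∈ halfEdges n)
    (i : ZMod t) (b : Bool) :
    (sideH (f (i, false)) ≠ sideH (f (i, true)) ∧
      rkH (f (i, false)) < rkH (f (i + 1, b)) ∧ rkH (f (i, true)) < rkH (f (i + 1, b))) ∨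
    (sideH (f (i, false)) ≠ sideH (f (i + 1, b)) ∧
      rkH (f (i, false)) < rkH (f (i, true)) ∧ rkH (f (i + 1, b)) < rkH (f (i, true))) ∨
    (sideH (f (i, true)) ≠ sideH (f (i + 1, b)) ∧
      rkH (f (i, true)) < rkH (f (i, false)) ∧ rkH (f (i + 1, b)) < rkH (f (i, false))) := by
  have hone : (1 : ZMod t) ≠ 0 := by
    haveI : Fact (1 < t) := ⟨ht⟩
    exact one_ne_zero
  have hadd : i + 1 ≠ i := fun h => hone (by rwa [add_eq_left] at h)
  refine coreLem _ _ _ ?_ ?_ ?_ (hedge i b)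
  · intro h; have := hf h; simp at this
  · intro h; exact hadd ((Prod.ext_iff.mp (hf h)).1).symm
  · intro h; exact hadd ((Prod.ext_iff.mp (hf h)).1).symm

/-- If `x_i, y_i` map to the same side, so do `x_{i+1}, y_{i+1}`, and the max rank
strictly decreases. -/
private lemma same_side_step (ht : 2 ≤ t) (hf : Function.Injective f)
    (hedge : ∀ (i : ZMod t) (b : Bool),
      ({f (i, false), f (i, true), f (i + 1, b)} : Finset (halfV n)) ∈ halfEdges n)
    (i : ZMod t) (hS : sideH (f (i, false)) = sideH (f (i, true))) :
    sideH (f (i + 1, false)) = sideH (f (i + 1, true)) ∧ Tf f (i + 1) < Tf f i := by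
  have key : ∀ b : Bool, sideH (f (i + 1, b)) ≠ sideH (f (i, false)) ∧
      rkH (f (i + 1, b)) < Tf f i := by
    intro b
    rcases Dlem f ht hf hedge i b with ⟨h1, _, _⟩ | ⟨h1, _, h3⟩ | ⟨h1, _, h3⟩
    · exact absurd hS h1
    · exact ⟨fun h => h1 h.symm, lt_of_lt_of_le h3 (le_max_right _ _)⟩
    · exact ⟨fun h => (h1 (hS ▸ h.symm)), lt_of_lt_of_le h3 (le_max_left _ _)⟩
  refine ⟨boolAux _ _ _ (key false).1 (key true).1, ?_⟩
  exact max_lt (key false).2 (key true).2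

/-- No level maps to a single side: otherwise the max rank decreases strictly forever
around the cycle. -/
private lemma no_same_side (ht : 2 ≤ t) (hf : Function.Injective f)
    (hedge : ∀ (i : ZMod t) (b : Bool),
      ({f (i, false), f (i, true), f (i + 1, b)} : Finset (halfV n)) ∈ halfEdges n)
    (i : ZMod t) : sideH (f (i, false)) ≠ sideH (f (i, true)) := by
  intro hS
  have key : ∀ k : ℕ, sideH (f (i + (k : ZMod t), false)) = sideH (f (i + (k : ZMod t), true)) ∧
      Tf f (i + (k : ZMod t)) + k ≤ Tf f i := by
    intro k
    induction k with
    | zero => simpa using hS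
    | succ m ih =>
      have step := same_side_step f ht hf hedge (i + (m : ZMod t)) ih.1
      have hcast : ((m + 1 : ℕ) : ZMod t) = (m : ZMod t) + 1 := by push_cast; ring
      rw [hcast, ← add_assoc]
      exact ⟨step.1, by have := step.2; omega⟩
  have := (key (Tf f i + 1)).2
  omega

/-- `G_n` contains no copy of any ring `R_t`, `t ≥ 2`: there is no injective
edge-preserving map from `R_t` into `G_n`. -/
theorem half_ring_free (n t : ℕ) (ht : 2 ≤ t) (f : ZMod t × Bool → halfV n)
    (hf : Function.Injective f) :
    ∃ e ∈ ringEdges t, Finset.image f e ∉ halfEdges n := by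
  by_contra hcon
  push_neg at hcon
  haveI : NeZero t := ⟨by omega⟩
  have hedge : ∀ (i : ZMod t) (b : Bool),
      ({f (i, false), f (i, true), f (i + 1, b)} : Finset (halfV n)) ∈ halfEdges n := by
    intro i b
    have := hcon {(i, false), (i, true), (i + 1, b)} ⟨i, b, rfl⟩
    simpa [Finset.image_insert] using this
  -- pick a level with maximal `Tf`
  obtain ⟨i, -, hi⟩ := Finset.exists_max_image Finset.univ (Tf f) ⟨0, Finset.mem_univ 0⟩
  have hmax : ∀ j, Tf f j ≤ Tf f i := fun j => hi j (Finset.mem_univ j)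
  have hmix := no_same_side f ht hf hedge i
  have key : ∀ b : Bool,
      (sideH (f (i + 1, b)) = sideH (f (i, true)) ∧ rkH (f (i, false)) < rkH (f (i, true))) ∨
      (sideH (f (i + 1, b)) = sideH (f (i, false)) ∧ rkH (f (i, true)) < rkH (f (i, false))) := by
    intro b
    rcases Dlem f ht hf hedge i b with ⟨_, h2, h3⟩ | ⟨h1, h2, _⟩ | ⟨h1, h2, _⟩
    · exfalso
      have hb : rkH (f (i + 1, b)) ≤ Tf f (i + 1) := by
        cases b
        · exact le_max_left _ _
        · exact le_max_right _ _
      have : rkH (f (i + 1, b)) ≤ Tf f i := le_trans hb (hmax (i + 1))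
      have hT : Tf f i = max (rkH (f (i, false))) (rkH (f (i, true))) := rfl
      omega
    · exact Or.inl ⟨boolAux _ _ _ (fun h => h1 h.symm) (fun h => hmix h.symm), h2⟩
    · exact Or.inr ⟨boolAux _ _ _ (fun h => h1 h.symm) hmix, h2⟩
  have hsame : sideH (f (i + 1, false)) = sideH (f (i + 1, true)) := by
    rcases key false with ⟨hA, hr⟩ | ⟨hA, hr⟩ <;> rcases key true with ⟨hB, hr'⟩ | ⟨hB, hr'⟩
    · exact hA.trans hB.symm
    · omega
    · omega
    · exact hA.trans hB.symm
  exact no_same_side f ht hf hedge (i + 1) hsame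

end Main
end

section
/- Let G be a 3-uniform hypergraph on n vertices such that every vertex lies in at least (1/2 + 1/t)·C(n,2) edges, where t ≥ 2 and n > t²/2. Then G contains a member of R*_{≤t}: there exist pairs {u_0,v_0}, ..., {u_{s-1},v_{s-1}} of vertices (2 ≤ s ≤ t, pairs pairwise distinct) such that {u_i, v_i, u_{i+1}} and {u_i, v_i, v_{i+1}} are edges for all i mod s. -/
/-!
Encode the 3-graph as the digraph on pairs of vertices with an arc `p → q` when `p ∪ {x}` is an
edge for both `x ∈ q`; an injective directed cycle of length `s` in it is exactly a ring of length
`s`. The in-neighbourhood of `q = {a, b}` is the intersection of the link graphs of `a` and `b`, so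
by the degree condition every in-degree is at least `2N/t`, where `N = C(n,2)` is the number of
pairs.

For the short cycle we follow Chvátal–Szemerédi. If a digraph with all in-degrees `≥ k + 1` has no
closed walk of length at most `2r`, then for radii `i ≤ r` no two vertices lie in each other's
in-ball of radius `i`. Averaging over this antisymmetric relation, some in-neighbour of `v` has at
most half of the in-neighbours of `v` in its ball, so each step grows the in-balls by `≥ k/2`, and
some in-ball of radius `r` has at most `(N + 1)/2` vertices. Together these give
`N ≥ (r + 1)k + 3`, which is false for `r = ⌊t/2⌋` and `k + 1 = ⌈2N/t⌉` once `n ≥ t`.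
-/

open Finset Function

theorem Finset.exists_two_mul_card_filter_le {α : Type*} [DecidableEq α] {A : Finset α}
    (hA : A.Nonempty) (S : α → α → Prop) [DecidableRel S]
    (hS : ∀ a ∈ A, ∀ b ∈ A, a ≠ b → S a b → ¬ S b a) :
    ∃ a ∈ A, 2 * #{b ∈ A | S a b} ≤ #A + 1 := by
  have hsum : ∑ a ∈ A, 2 * #{b ∈ A | b ≠ a ∧ S a b} ≤ ∑ a ∈ A, #(A.erase a) := by
    simp only [card_filter, two_mul, sum_add_distrib]
    nth_rewrite 2 [sum_comm]
    rw [← sum_add_distrib]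
    gcongr with a ha
    rw [← filter_ne', card_filter, ← sum_add_distrib]
    gcongr with b hb
    have := hS a ha b hb
    have := hS b hb a ha
    split_ifs <;> grind
  obtain ⟨a, ha, h⟩ := exists_le_of_sum_le hA hsum
  have hself : #{b ∈ A | S a b} ≤ #{b ∈ A | b ≠ a ∧ S a b} + 1 := by
    refine (card_le_card fun b hb ↦ ?_).trans (card_insert_le a _)
    by_cases hba : b = a <;> simp_all
  rw [card_erase_of_mem ha] at h
  exact ⟨a, ha, by have := hA.card_pos; omega⟩

namespace Digraph

variable {P : Type*} (G : Digraph P)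

def HasWalk (m : ℕ) (u v : P) : Prop :=
  ∃ f : ℕ → P, f 0 = u ∧ f m = v ∧ ∀ i < m, G.Adj (f i) (f (i + 1))

def NoClosedWalkLE (l : ℕ) : Prop :=
  ∀ m, 0 < m → m ≤ l → ∀ x, ¬ G.HasWalk m x x

variable {G}

theorem hasWalk_zero (v : P) : G.HasWalk 0 v v := ⟨fun _ ↦ v, rfl, rfl, by simp⟩

theorem hasWalk_one {u v : P} (h : G.Adj u v) : G.HasWalk 1 u v :=
  ⟨fun i ↦ if i = 0 then u else v, rfl, rfl, by simpa using h⟩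

theorem HasWalk.append {j j' : ℕ} {u v w : P} (h : G.HasWalk j u v) (h' : G.HasWalk j' v w) :
    G.HasWalk (j + j') u w := by
  obtain ⟨f, rfl, rfl, hf⟩ := h
  obtain ⟨g, hg0, rfl, hg⟩ := h'
  refine ⟨fun i ↦ if i ≤ j then f i else g (i - j), by simp, by simp; grind, fun i hi ↦ ?_⟩
  rcases lt_trichotomy i j with hij | rfl | hij
  · simpa [hij.le, Nat.succ_le_of_lt hij] using hf i hij
  · simpa [hg0] using hg 0 (by omega)
  · simpa [show ¬ i ≤ j by omega, show ¬ i + 1 ≤ j by omega, show i + 1 - j = i - j + 1 by omega]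
      using hg (i - j) (by omega)

theorem hasWalk_of_forall_adj {m : ℕ} {f : ℕ → P} (hf : ∀ i < m, G.Adj (f i) (f (i + 1))) {i j : ℕ}
    (hij : i ≤ j) (hj : j ≤ m) : G.HasWalk (j - i) (f i) (f j) :=
  ⟨fun l ↦ f (i + l), rfl, by simp [Nat.add_sub_cancel' hij], fun l hl ↦ hf (i + l) (by omega)⟩

theorem exists_injective_cycle_of_hasWalk (hloop : ∀ v, ¬ G.Adj v v) {m : ℕ} (hm : 0 < m)
    {x : P} (hw : G.HasWalk m x x) :
    ∃ s, 2 ≤ s ∧ s ≤ m ∧ ∃ c : ZMod s → P, Injective c ∧ ∀ i, G.Adj (c i) (c (i + 1)) := by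
  induction m using Nat.strong_induction_on generalizing x with | _ m ih
  obtain ⟨f, hf0, hfm, hf⟩ := hw
  by_cases hinj : Set.InjOn f (Set.Iio m)
  · have hm2 : 2 ≤ m := by
      by_contra! hm1
      obtain rfl : m = 1 := by omega
      exact hloop x (by simpa [hf0, hfm] using hf 0 one_pos)
    have : Fact (1 < m) := ⟨hm2⟩
    refine ⟨m, hm2, le_rfl, fun z ↦ f z.val, fun z z' h ↦ ZMod.val_injective m <|
      hinj (ZMod.val_lt z) (ZMod.val_lt z') h, fun i ↦ ?_⟩
    have hwrap : f (i + 1).val = f (i.val + 1) := by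
      rw [ZMod.val_add, ZMod.val_one]
      rcases Nat.lt_or_eq_of_le (Nat.succ_le_of_lt (ZMod.val_lt i)) with h | h
      · rw [Nat.mod_eq_of_lt h]
      · rw [← Nat.succ_eq_add_one, h, Nat.mod_self, hf0, hfm]
    simpa only [hwrap] using hf i.val (ZMod.val_lt i)
  · obtain ⟨i, j, hij, hjm, hfij⟩ : ∃ i j, i < j ∧ j < m ∧ f i = f j := by
      simp only [Set.InjOn, Set.mem_Iio, not_forall] at hinj
      obtain ⟨i, hi, j, hj, hfij, hne⟩ := hinj
      rcases Nat.lt_or_gt_of_ne hne with h | h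
      · exact ⟨i, j, h, hj, hfij⟩
      · exact ⟨j, i, h, hi, hfij.symm⟩
    have hcyc := hasWalk_of_forall_adj hf hij.le hjm.le
    rw [← hfij] at hcyc
    obtain ⟨s, hs, hsj, hc⟩ := ih (j - i) (by omega) (by omega) hcyc
    exact ⟨s, hs, by omega, hc⟩

section Balls

variable [Fintype P] (G) [DecidableRel G.Adj]

def inNeighborFinset (v : P) : Finset P := {u | G.Adj u v}

variable {G} in
@[simp]
theorem mem_inNeighborFinset {u v : P} : u ∈ G.inNeighborFinset v ↔ G.Adj u v := by
  simp [inNeighborFinset]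

variable [DecidableEq P]

def inBall : ℕ → P → Finset P
  | 0, v => {v}
  | i + 1, v => insert v ((G.inNeighborFinset v).biUnion (inBall i))

variable {G}

theorem self_mem_inBall (i : ℕ) (v : P) : v ∈ G.inBall i v := by
  cases i <;> simp [inBall]

theorem inBall_subset_inBall_succ {i : ℕ} {a v : P} (h : G.Adj a v) :
    G.inBall i a ⊆ G.inBall (i + 1) v :=
  (subset_biUnion_of_mem _ (mem_inNeighborFinset.mpr h)).trans (subset_insert _ _)

theorem inNeighborFinset_subset_inBall_succ (i : ℕ) (v : P) :
    G.inNeighborFinset v ⊆ G.inBall (i + 1) v :=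
  fun a ha ↦ inBall_subset_inBall_succ (mem_inNeighborFinset.mp ha) (self_mem_inBall i a)

theorem exists_hasWalk_of_mem_inBall {i : ℕ} {u v : P} (h : u ∈ G.inBall i v) :
    ∃ j ≤ i, G.HasWalk j u v := by
  induction i generalizing v with
  | zero => exact ⟨0, le_rfl, by simp_all [inBall, hasWalk_zero]⟩
  | succ i ih =>
    simp only [inBall, mem_insert, mem_biUnion, mem_inNeighborFinset] at h
    obtain rfl | ⟨a, ha, hu⟩ := h
    · exact ⟨0, by omega, hasWalk_zero u⟩
    · obtain ⟨j, hj, hw⟩ := ih hu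
      exact ⟨j + 1, by omega, hw.append (hasWalk_one ha)⟩

theorem notMem_inBall_of_mem_inBall {r i : ℕ}
    (hG : G.NoClosedWalkLE (2 * r)) (hi : i ≤ r) {a b : P}
    (hab : a ≠ b) (ha : a ∈ G.inBall i b) : b ∉ G.inBall i a := by
  intro hb
  obtain ⟨j, hj, hw⟩ := exists_hasWalk_of_mem_inBall ha
  obtain ⟨j', hj', hw'⟩ := exists_hasWalk_of_mem_inBall hb
  have hj0 : j ≠ 0 := by
    rintro rfl
    obtain ⟨f, rfl, rfl, -⟩ := hw
    exact hab rfl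
  exact hG (j + j') (by omega) (by omega) a (hw.append hw')

theorem card_inBall {r k : ℕ} (hG : G.NoClosedWalkLE (2 * r))
    (hdeg : ∀ v, k + 1 ≤ #(G.inNeighborFinset v)) {j : ℕ} (hj : j < r) (v : P) :
    2 * (k + 2) + j * k ≤ 2 * #(G.inBall (j + 1) v) := by
  induction j generalizing v with
  | zero =>
    have hv : v ∉ G.inNeighborFinset v := by
      simpa using fun h ↦ hG 1 one_pos (by omega) v (hasWalk_one h)
    have hball : G.inBall 1 v = insert v (G.inNeighborFinset v) := by
      simp [inBall, biUnion_singleton_eq_self]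
    have := hdeg v
    rw [hball, card_insert_of_notMem hv]
    omega
  | succ j ih =>
    -- Some in-neighbour `a` of `v` has at most half of `A` in its ball `B`; the rest of `A`
    -- enlarges `B` by at least `k/2` inside the ball of `v`.
    set A := G.inNeighborFinset v
    have hA : A.Nonempty := card_pos.mp (k.succ_pos.trans_le (hdeg v))
    obtain ⟨a, ha, hfew⟩ := exists_two_mul_card_filter_le hA (fun a b ↦ b ∈ G.inBall (j + 1) a)
      fun a _ b _ hab ↦ notMem_inBall_of_mem_inBall (i := j + 1) hG (by omega) (Ne.symm hab)
    set B := G.inBall (j + 1) a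
    rw [filter_mem_eq_inter] at hfew
    have hdisj : Disjoint B (A \ B) := disjoint_sdiff
    have hsub : B ∪ A \ B ⊆ G.inBall (j + 2) v := union_subset
      (inBall_subset_inBall_succ (mem_inNeighborFinset.mp ha))
      ((sdiff_subset).trans (inNeighborFinset_subset_inBall_succ _ v))
    have := card_le_card hsub
    rw [card_union_of_disjoint hdisj] at this
    have := card_sdiff_add_card_inter A B
    have := ih (by omega) a
    have := hdeg v
    nlinarith

theorem add_three_le_card [Nonempty P] {r k : ℕ}
    (hG : G.NoClosedWalkLE (2 * r)) (hr : 0 < r)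
    (hdeg : ∀ v, k + 1 ≤ #(G.inNeighborFinset v)) :
    (r + 1) * k + 3 ≤ Fintype.card P := by
  obtain ⟨v, -, hfew⟩ := exists_two_mul_card_filter_le univ_nonempty
    (fun v u ↦ u ∈ G.inBall r v) fun v _ u _ hvu ↦ notMem_inBall_of_mem_inBall hG le_rfl hvu.symm
  rw [filter_mem_eq_inter, univ_inter, card_univ] at hfew
  obtain ⟨j, rfl⟩ : ∃ j, r = j + 1 := ⟨r - 1, by omega⟩
  have := card_inBall hG hdeg (Nat.lt_succ_self j) v
  nlinarith

end Balls

theorem exists_injective_cycle_of_card_le [Fintype P] [DecidableEq P] [DecidableRel G.Adj]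
    [Nonempty P] (hloop : ∀ v, ¬ G.Adj v v) {r k : ℕ} (hr : 0 < r)
    (hdeg : ∀ v, k + 1 ≤ #(G.inNeighborFinset v)) (hcard : Fintype.card P ≤ (r + 1) * k + 2) :
    ∃ s, 2 ≤ s ∧ s ≤ 2 * r ∧ ∃ c : ZMod s → P, Injective c ∧ ∀ i, G.Adj (c i) (c (i + 1)) := by
  by_contra hno
  have hG : G.NoClosedWalkLE (2 * r) := fun m hm hmr x hw ↦ by
    obtain ⟨s, hs, hsm, hc⟩ := exists_injective_cycle_of_hasWalk hloop hm hw
    exact hno ⟨s, hs, hsm.trans hmr, hc⟩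
  have := add_three_le_card hG hr hdeg
  omega

end Digraph

theorem le_div_two_add_one_mul_add_two {t N k : ℕ} (ht : 0 < t) (hN : (t : ℝ) * (t - 1) ≤ 2 * N)
    (hk : (2 * N / t : ℝ) ≤ k + 1) : N ≤ (t / 2 + 1) * k + 2 := by
  have htR : (0 : ℝ) < t := by exact_mod_cast ht
  have hodd : (t : ℝ) ≤ 2 * (t / 2 : ℕ) + 1 := by exact_mod_cast (by omega : t ≤ 2 * (t / 2) + 1)
  rw [div_le_iff₀ htR] at hk
  have hkt : (t : ℝ) - 2 ≤ k := by nlinarith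
  suffices (N : ℝ) ≤ ((t / 2 : ℕ) + 1) * k + 2 by exact_mod_cast this
  nlinarith

section Hypergraph

variable {V : Type*} [DecidableEq V] (E : Set (Finset V))

def pairDigraph : Digraph {p : Finset V // p.card = 2} where
  Adj p q := ∀ x ∈ q.1, insert x p.1 ∈ E

open Classical in
/-- The edge set of the link graph `L(x)`. -/
noncomputable def linkPairs [Fintype V] (x : V) : Finset {p : Finset V // p.card = 2} :=
  {p | insert x p.1 ∈ E}

variable {E}

theorem notMem_of_insert_mem (hunif : ∀ e ∈ E, e.card = 3) {x : V} {p : Finset V}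
    (hp : p.card = 2) (h : insert x p ∈ E) : x ∉ p := by
  intro hx
  have := hunif _ h
  rw [insert_eq_of_mem hx] at this
  omega

theorem pairDigraph_loopless (hunif : ∀ e ∈ E, e.card = 3) (p : {p : Finset V // p.card = 2}) :
    ¬ (pairDigraph E).Adj p p := fun h ↦
  have ⟨x, hx⟩ := card_pos.mp (by rw [p.2]; exact two_pos)
  notMem_of_insert_mem hunif p.2 (h x hx) hx

theorem card_linkPairs [Fintype V] (hunif : ∀ e ∈ E, e.card = 3) (x : V) :
    #(linkPairs E x) = {e | e ∈ E ∧ x ∈ e}.ncard := by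
  have hset : {e | e ∈ E ∧ x ∈ e} = ↑((linkPairs E x).image fun p ↦ insert x p.1) := by
    ext e
    simp only [linkPairs, Set.mem_ofPred_eq, coe_image, coe_filter, mem_univ, true_and,
      Set.mem_image]
    constructor
    · rintro ⟨he, hx⟩
      refine ⟨⟨e.erase x, by rw [card_erase_of_mem hx, hunif e he]⟩, ?_, insert_erase hx⟩
      simpa [insert_erase hx] using he
    · rintro ⟨p, hp, rfl⟩
      exact ⟨hp, mem_insert_self x _⟩
  rw [hset, Set.ncard_coe_finset, card_image_of_injOn]
  intro p hp q hq hpq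
  simp only [linkPairs, coe_filter, mem_univ, true_and, Set.mem_ofPred_eq] at hp hq hpq
  rw [Subtype.ext_iff, ← erase_insert (notMem_of_insert_mem hunif p.2 hp),
    ← erase_insert (notMem_of_insert_mem hunif q.2 hq), hpq]

theorem linkPairs_inter_linkPairs [Fintype V] [DecidableRel (pairDigraph E).Adj]
    {q : {p : Finset V // p.card = 2}} {a b : V} (hq : q.1 = {a, b}) :
    linkPairs E a ∩ linkPairs E b = (pairDigraph E).inNeighborFinset q := by
  ext p
  rw [Digraph.mem_inNeighborFinset]
  simp [linkPairs, pairDigraph, hq]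

theorem two_mul_sub_card_le_card_inNeighborFinset [Fintype V] [DecidableRel (pairDigraph E).Adj]
    {δ : ℝ} (hδ : ∀ x, δ ≤ #(linkPairs E x)) (q : {p : Finset V // p.card = 2}) :
    2 * δ - Fintype.card {p : Finset V // p.card = 2} ≤ #((pairDigraph E).inNeighborFinset q) := by
  obtain ⟨a, b, -, hq⟩ := card_eq_two.mp q.2
  have hunion := card_union_add_card_inter (linkPairs E a) (linkPairs E b)
  rw [linkPairs_inter_linkPairs hq] at hunion
  have : #(linkPairs E a ∪ linkPairs E b) ≤ Fintype.card {p : Finset V // p.card = 2} :=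
    card_le_univ _
  have := hδ a
  have := hδ b
  have : (#(linkPairs E a) + #(linkPairs E b) : ℝ) ≤
      Fintype.card {p : Finset V // p.card = 2} + #((pairDigraph E).inNeighborFinset q) := by
    exact_mod_cast (by omega)
  linarith

theorem exists_ring_of_cycle {s : ℕ} {c : ZMod s → {p : Finset V // p.card = 2}}
    (hc : Injective c) (hadj : ∀ i, (pairDigraph E).Adj (c i) (c (i + 1))) :
    ∃ u v : ZMod s → V, (∀ i, u i ≠ v i) ∧
      (∀ i j : ZMod s, i ≠ j → ({u i, v i} : Finset V) ≠ ({u j, v j} : Finset V)) ∧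
      (∀ i : ZMod s, ({u i, v i, u (i + 1)} : Finset V) ∈ E ∧
        ({u i, v i, v (i + 1)} : Finset V) ∈ E) := by
  choose u v huv hc_eq using fun i ↦ card_eq_two.mp (c i).2
  refine ⟨u, v, huv, fun i j hij h ↦ hij (hc (Subtype.ext ?_)), fun i ↦ ?_⟩
  · rw [hc_eq, hc_eq, h]
  · have hmem w (hw : w ∈ (c (i + 1)).1) : ({u i, v i, w} : Finset V) ∈ E := by
      have := hadj i w hw
      rwa [hc_eq, insert_comm w, pair_comm w] at this
    exact ⟨hmem _ (by simp [hc_eq]), hmem _ (by simp [hc_eq])⟩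

end Hypergraph

/-- If every vertex of a 3-graph `G` on `n > t²/2` vertices lies in at least
`(1/2 + 1/t)·C(n,2)` edges, then `G` contains a degenerate ring of length `s` for
some `2 ≤ s ≤ t`: pairwise distinct pairs `{u_i, v_i}` (indices mod `s`) with
`{u_i, v_i, u_{i+1}}` and `{u_i, v_i, v_{i+1}}` edges for all `i`. -/
theorem min_degree_ring (t n : ℕ) (ht : 2 ≤ t) (hn : (t : ℝ) ^ 2 / 2 < n)
    (V : Type) [Fintype V] [DecidableEq V] (hcard : Fintype.card V = n)
    (E : Set (Finset V)) (hunif : ∀ e ∈ E, e.card = 3)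
    (hdeg : ∀ v : V,
      ((1 : ℝ) / 2 + 1 / t) * (n.choose 2) ≤ ({e | e ∈ E ∧ v ∈ e}.ncard : ℝ)) :
    ∃ s : ℕ, 2 ≤ s ∧ s ≤ t ∧
      ∃ u v : ZMod s → V,
        (∀ i, u i ≠ v i) ∧
        (∀ i j : ZMod s, i ≠ j → ({u i, v i} : Finset V) ≠ ({u j, v j} : Finset V)) ∧
        (∀ i : ZMod s, ({u i, v i, u (i + 1)} : Finset V) ∈ E ∧
          ({u i, v i, v (i + 1)} : Finset V) ∈ E) := by
  classical
  set N := n.choose 2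
  have htR : (2 : ℝ) ≤ t := by exact_mod_cast ht
  have htn : (t : ℝ) ≤ n := by nlinarith
  have hN : (t : ℝ) * (t - 1) ≤ 2 * N := by rw [Nat.cast_choose_two]; nlinarith
  have hNpos : (0 : ℝ) < N := by nlinarith
  have hcardP : Fintype.card {p : Finset V // p.card = 2} = N := by simp [N, hcard]
  have : Nonempty {p : Finset V // p.card = 2} :=
    Fintype.card_pos_iff.mp (by rw [hcardP]; exact_mod_cast hNpos)
  have hin q : (2 * N / t : ℝ) ≤ #((pairDigraph E).inNeighborFinset q) := by
    have := two_mul_sub_card_le_card_inNeighborFinset (δ := (1 / 2 + 1 / t) * N)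
      (fun x ↦ card_linkPairs hunif x ▸ hdeg x) q
    rw [hcardP] at this
    convert this using 1
    field_simp
    ring
  obtain ⟨k, hk⟩ : ∃ k, k + 1 = ⌈(2 * N / t : ℝ)⌉₊ :=
    ⟨_, Nat.sub_add_cancel (Nat.one_le_ceil_iff.mpr (by positivity))⟩
  obtain ⟨s, hs, hst, c, hc, hadj⟩ := (pairDigraph E).exists_injective_cycle_of_card_le
    (pairDigraph_loopless hunif) (r := t / 2) (by omega) (fun q ↦ hk ▸ Nat.ceil_le.mpr (hin q))
    (hcardP.symm ▸ le_div_two_add_one_mul_add_two (by omega) hN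
      (by exact_mod_cast hk ▸ Nat.le_ceil _))
  exact ⟨s, hs, hst.trans (Nat.mul_div_le t 2), exists_ring_of_cycle hc hadj⟩
end

section
/- For all positive integers p, q ≥ 2, the ring R_{pq} is a subgraph of the q-blowup R_p(q) of the ring R_p: there is an injective map from the vertices of R_{pq} to the vertices of R_p(q) sending every edge of R_{pq} to an edge of R_p(q). -/
/-- The edge set of the `q`-blowup `H(q)` of a 3-graph with edge set `E`: each vertex
`v` is replaced by the clones `(v, c)` for `c : Fin q`, and each edge `e ∈ E` by all
triples consisting of one clone of each of its vertices. -/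
def blowupEdges {V : Type*} [DecidableEq V] (E : Set (Finset V)) (q : ℕ) :
    Set (Finset (V × Fin q)) :=
  {e' | ∃ e ∈ E, ∃ g : V → Fin q, e' = e.image (fun v => (v, g v))}

/-- For `p, q ≥ 2`, the ring `R_{pq}` is a subgraph of the `q`-blowup `R_p(q)`:
there is an injective map from the vertices of `R_{pq}` to those of `R_p(q)` sending
every edge of `R_{pq}` to an edge of `R_p(q)`. -/
theorem ring_pq_subgraph_blowup (p q : ℕ) (hp : 2 ≤ p) (hq : 2 ≤ q) :
    ∃ f : ZMod (p * q) × Bool → (ZMod p × Bool) × Fin q,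
      Function.Injective f ∧
      ∀ e ∈ ringEdges (p * q), Finset.image f e ∈ blowupEdges (ringEdges p) q := by
  have hp0 : 0 < p := by omega
  haveI : NeZero (p * q) := ⟨by positivity⟩
  haveI : NeZero p := ⟨by omega⟩
  haveI : Fact (1 < p) := ⟨hp⟩
  have hdvd : p ∣ p * q := ⟨q, rfl⟩
  have hlt : ∀ i : ZMod (p * q), i.val / p < q := by
    intro i
    exact Nat.div_lt_of_lt_mul i.val_lt
  set π : ZMod (p * q) →+* ZMod p := ZMod.castHom hdvd (ZMod p) with hπ
  have hval : ∀ i : ZMod (p * q), (π i).val = i.val % p := by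
    intro i
    rw [hπ, ZMod.castHom_apply, ← ZMod.natCast_val, ZMod.val_natCast]
  refine ⟨fun v => ((π v.1, v.2), ⟨v.1.val / p, hlt v.1⟩), ?_, ?_⟩
  · rintro ⟨i, b⟩ ⟨i', b'⟩ h
    simp only [Prod.mk.injEq, Fin.mk.injEq] at h
    obtain ⟨⟨h1, h2⟩, h3⟩ := h
    have hm : i.val % p = i'.val % p := by rw [← hval i, ← hval i', h1]
    have hv : i.val = i'.val := by
      rw [← Nat.div_add_mod i.val p, ← Nat.div_add_mod i'.val p, h3, hm]
    have : i = i' := ZMod.val_injective _ hv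
    simp [this, h2]
  · rintro e ⟨i, b, rfl⟩
    have hadd : π (i + 1) = π i + 1 := by rw [map_add, map_one]
    have hne : π i + 1 ≠ π i := by
      intro h
      have : (1 : ZMod p) = 0 := by
        have := h.trans (add_zero (π i)).symm
        exact add_left_cancel this
      exact one_ne_zero this
    refine ⟨{(π i, false), (π i, true), (π i + 1, b)}, ⟨π i, b, rfl⟩,
      fun v => if v.1 = π i then ⟨i.val / p, hlt i⟩ else ⟨(i + 1).val / p, hlt (i + 1)⟩, ?_⟩
    simp [Finset.image_insert, hadd, hne]
end

section
/- Let T(n) be the Turán 3-graph: partition n vertices into three parts V_1, V_2, V_3 as equally as possible, with edges all triples of the forms v_1 v_2 v_3 (one vertex in each part), u_1 v_1 v_2, u_2 v_2 v_3, u_3 v_3 v_1, where u_i, v_i ∈ V_i. If T(n) contains a copy of the ring R_t, then t is divisible by 3. -/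
/-- The edge set of Turán's construction `T(n)`: the parts are `V_i = {v | v % 3 = i}`
(as equal as possible), and the edges are the triples with one vertex in each part,
together with the triples with two vertices in `V_i` and one in `V_{i+1}` (cyclically). -/
def turanEdges (n : ℕ) : Set (Finset (Fin n)) :=
  {e | e.card = 3 ∧
    ((∀ i : ZMod 3, (e.filter (fun v : Fin n => (v : ℕ) % 3 = i.val)).card = 1) ∨
     (∃ i : ZMod 3, (e.filter (fun v : Fin n => (v : ℕ) % 3 = i.val)).card = 2 ∧
        (e.filter (fun v : Fin n => (v : ℕ) % 3 = (i + 1).val)).card = 1))}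

def cnt3 (a c d j : ZMod 3) : ℕ :=
  (if a = j then 1 else 0) + (if c = j then 1 else 0) + (if d = j then 1 else 0)

def Good3 (a c d : ZMod 3) : Prop :=
  (∀ j : ZMod 3, cnt3 a c d j = 1) ∨
    (∃ j : ZMod 3, cnt3 a c d j = 2 ∧ cnt3 a c d (j + 1) = 1)

instance (a c d : ZMod 3) : Decidable (Good3 a c d) := by
  unfold Good3; infer_instance

lemma good3_diag : ∀ a c d : ZMod 3, Good3 a c d → a = c → d = a + 1 := by decide

lemma good3_off : ∀ a c d e : ZMod 3,
    Good3 a c d → Good3 a c e → a ≠ c → d ≠ e → d + e = a + c + 1 := by decide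

lemma filter_card_triple {n : ℕ} (u v w : Fin n) (huv : u ≠ v) (huw : u ≠ w) (hvw : v ≠ w)
    (j : ZMod 3) :
    (({u, v, w} : Finset (Fin n)).filter (fun x : Fin n => (x : ℕ) % 3 = j.val)).card =
      cnt3 ((u : ℕ) : ZMod 3) ((v : ℕ) : ZMod 3) ((w : ℕ) : ZMod 3) j := by
  have key : ∀ x : Fin n, ((x : ℕ) % 3 = j.val) ↔ (((x : ℕ) : ZMod 3) = j) := by
    intro x
    rw [← ZMod.val_natCast]
    exact ⟨fun h => ZMod.val_injective _ h, fun h => by rw [h]⟩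
  have hu : u ∉ ({v, w} : Finset (Fin n)) := by simp [huv, huw]
  have hv : v ∉ ({w} : Finset (Fin n)) := by simp [hvw]
  rw [Finset.card_filter]
  rw [show ({u, v, w} : Finset (Fin n)) = insert u (insert v {w}) from rfl]
  rw [Finset.sum_insert hu, Finset.sum_insert hv, Finset.sum_singleton]
  simp only [key, cnt3]
  ring

/-- If Turán's construction `T(n)` contains a copy of the ring `R_t` (`t ≥ 2`),
then `t` is divisible by `3`. -/
theorem turan_ring_three_dvd (n t : ℕ) (ht : 2 ≤ t)
    (f : ZMod t × Bool → Fin n) (hf : Function.Injective f)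
    (hedge : ∀ e ∈ ringEdges t, Finset.image f e ∈ turanEdges n) :
    3 ∣ t := by
  haveI : NeZero t := ⟨by omega⟩
  -- residues
  set r : Fin n → ZMod 3 := fun x => ((x : ℕ) : ZMod 3) with hr
  set a : ZMod t → ZMod 3 := fun i => r (f (i, false)) with ha
  set c : ZMod t → ZMod 3 := fun i => r (f (i, true)) with hc
  have hone : (1 : ZMod t) ≠ 0 := by
    intro h
    have h2 := (ZMod.natCast_eq_zero_iff 1 t).mp (by exact_mod_cast h)
    have := Nat.le_of_dvd one_pos h2
    omega
  have hGood : ∀ (i : ZMod t) (b : Bool), Good3 (a i) (c i) (r (f (i + 1, b))) := by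
    intro i b
    have hmem : ({(i, false), (i, true), (i + 1, b)} : Finset (ZMod t × Bool)) ∈ ringEdges t :=
      ⟨i, b, rfl⟩
    have h2 := hedge _ hmem
    have hne1 : ((i, false) : ZMod t × Bool) ≠ (i, true) := by simp
    have hne2 : ((i, false) : ZMod t × Bool) ≠ (i + 1, b) := by
      intro h; apply hone
      have h1 : i = i + 1 := congrArg Prod.fst h
      exact left_eq_add.mp h1
    have hne3 : ((i, true) : ZMod t × Bool) ≠ (i + 1, b) := by
      intro h; apply hone
      have h1 : i = i + 1 := congrArg Prod.fst h
      exact left_eq_add.mp h1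
    have himg : Finset.image f ({(i, false), (i, true), (i + 1, b)} : Finset (ZMod t × Bool)) =
        {f (i, false), f (i, true), f (i + 1, b)} := by
      simp [Finset.image_insert]
    rw [himg] at h2
    obtain ⟨-, hdisj⟩ := h2
    have e1 : f (i, false) ≠ f (i, true) := fun h => hne1 (hf h)
    have e2 : f (i, false) ≠ f (i + 1, b) := fun h => hne2 (hf h)
    have e3 : f (i, true) ≠ f (i + 1, b) := fun h => hne3 (hf h)
    rcases hdisj with h | ⟨j, hj1, hj2⟩
    · left; intro j
      have := h j
      rwa [filter_card_triple _ _ _ e1 e2 e3] at this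
    · right; exact ⟨j, by rwa [filter_card_triple _ _ _ e1 e2 e3] at hj1,
        by rwa [filter_card_triple _ _ _ e1 e2 e3] at hj2⟩
  have hGa : ∀ i : ZMod t, Good3 (a i) (c i) (a (i + 1)) := fun i => hGood i false
  have hGc : ∀ i : ZMod t, Good3 (a i) (c i) (c (i + 1)) := fun i => hGood i true
  have key : (t : ZMod 3) = 0 := by
    by_cases hd : ∃ i, a i = c i
    · obtain ⟨i0, h0⟩ := hd
      have step : ∀ k : ℕ, a (i0 + (k : ZMod t)) = c (i0 + (k : ZMod t)) ∧
          a (i0 + (k : ZMod t)) = a i0 + (k : ZMod 3) := by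
        intro k
        induction k with
        | zero => exact ⟨by simpa using h0, by simp⟩
        | succ m ih =>
          obtain ⟨ihd, ihv⟩ := ih
          have ea := good3_diag _ _ _ (hGa (i0 + (m : ZMod t))) ihd
          have ec := good3_diag _ _ _ (hGc (i0 + (m : ZMod t))) ihd
          have harg : i0 + ((m + 1 : ℕ) : ZMod t) = (i0 + (m : ZMod t)) + 1 := by
            push_cast; ring
          constructor
          · rw [harg, ea, ec]
          · rw [harg, ea, ihv]; push_cast; ring
      have := (step t).2
      rw [ZMod.natCast_self, add_zero] at this
      exact (left_eq_add.mp this)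
    · push_neg at hd
      have step : ∀ k : ℕ, a ((k : ZMod t)) + c ((k : ZMod t)) = a 0 + c 0 + (k : ZMod 3) := by
        intro k
        induction k with
        | zero => simp
        | succ m ih =>
          have harg : ((m + 1 : ℕ) : ZMod t) = (m : ZMod t) + 1 := by push_cast; ring
          rw [harg]
          have := good3_off _ _ _ _ (hGa (m : ZMod t)) (hGc (m : ZMod t))
            (hd (m : ZMod t)) (by rw [← harg]; exact hd _)
          rw [this, ih]; push_cast; ring
      have := step t
      rw [ZMod.natCast_self] at this
      exact (left_eq_add.mp this)
  exact (ZMod.natCast_eq_zero_iff t 3).mp key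
end

section
/- Let H be a 3-graph on 2t vertices with the (2t, t+1)-property (every t+1 vertices contain an edge), let G be a 3-graph on n vertices with minimum co-degree δ_2(G) ≥ ⌊n/2⌋ + 1, and suppose G contains a copy of the 2-blowup H(2) of H, with clones v, v' for each vertex v of H. Then some vertex u* of G lies in N_G(v, v') for all three vertices v of some edge of H. -/
/-- Let `H` be a 3-graph on `2t` vertices with the `(2t, t+1)`-property (every `t+1`
vertices contain an edge), and let `G` be a 3-graph on `n` vertices with minimum
co-degree at least `⌊n/2⌋ + 1` containing a copy of the 2-blowup `H(2)` (via the
injection `c`, where `c (w, 0)` and `c (w, 1)` are the clones of `w`). Then some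
vertex `u` of `G` lies in `N_G(c (w,0), c (w,1))` for all three vertices `w` of some
edge of `H`. -/
theorem codegree_blowup_property (t n : ℕ) (ht : 1 ≤ t)
    (W : Type) [Fintype W] [DecidableEq W] (hW : Fintype.card W = 2 * t)
    (EH : Set (Finset W)) (hHunif : ∀ e ∈ EH, e.card = 3)
    (hprop : ∀ S : Finset W, S.card = t + 1 → ∃ e ∈ EH, e ⊆ S)
    (V : Type) [Fintype V] [DecidableEq V] (hV : Fintype.card V = n)
    (EG : Set (Finset V)) (hGunif : ∀ e ∈ EG, e.card = 3)
    (hdelta : ∀ x y : V, x ≠ y →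
      n / 2 + 1 ≤ ({z : V | ({x, y, z} : Finset V) ∈ EG}.ncard))
    (c : W × Fin 2 → V) (hc : Function.Injective c)
    (hcopy : ∀ e ∈ EH, ∀ g : W → Fin 2, e.image (fun w => c (w, g w)) ∈ EG) :
    ∃ (u : V) (e : Finset W), e ∈ EH ∧
      ∀ w ∈ e, ({c (w, 0), c (w, 1), u} : Finset V) ∈ EG := by
  classical
  set A : W → Finset V := fun w =>
    Finset.univ.filter (fun z => ({c (w, 0), c (w, 1), z} : Finset V) ∈ EG) with hA
  have hAcard : ∀ w : W, n / 2 + 1 ≤ (A w).card := by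
    intro w
    have hne : c (w, 0) ≠ c (w, 1) := by
      intro h
      have := hc h
      simp at this
    have := hdelta (c (w, 0)) (c (w, 1)) hne
    have heq : ({z : V | ({c (w, 0), c (w, 1), z} : Finset V) ∈ EG} : Set V) = ↑(A w) := by
      ext z; simp [hA]
    rwa [heq, Set.ncard_coe_finset] at this
  -- double counting
  have hsum : ∑ w : W, (A w).card = ∑ u : V, (Finset.univ.filter (fun w => u ∈ A w)).card := by
    simp only [Finset.card_eq_sum_ones]
    rw [Finset.sum_comm' (s := Finset.univ) (t := fun w => A w)
      (t' := Finset.univ) (s' := fun u => Finset.univ.filter (fun w => u ∈ A w))]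
    intro w u; simp
  -- find u with many w's
  have hexists : ∃ u : V, t + 1 ≤ (Finset.univ.filter (fun w => u ∈ A w)).card := by
    by_contra h
    push_neg at h
    have hub : ∑ u : V, (Finset.univ.filter (fun w => u ∈ A w)).card ≤ n * t := by
      calc ∑ u : V, (Finset.univ.filter (fun w => u ∈ A w)).card
          ≤ ∑ _u : V, t := Finset.sum_le_sum (fun u _ => Nat.lt_succ_iff.mp (h u))
        _ = n * t := by simp [hV, Finset.sum_const, mul_comm]
    have hlb : 2 * t * (n / 2 + 1) ≤ ∑ w : W, (A w).card := by
      calc 2 * t * (n / 2 + 1) = ∑ _w : W, (n / 2 + 1) := by simp [hW, mul_comm]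
        _ ≤ ∑ w : W, (A w).card := Finset.sum_le_sum (fun w _ => hAcard w)
    have hgt : n * t < 2 * t * (n / 2 + 1) := by
      have h2 : n ≤ 2 * (n / 2) + 1 := by omega
      calc n * t ≤ (2 * (n / 2) + 1) * t := Nat.mul_le_mul_right t h2
        _ < 2 * t * (n / 2 + 1) := by ring_nf; omega
    omega
  obtain ⟨u, hu⟩ := hexists
  obtain ⟨S, hSsub, hScard⟩ := Finset.exists_subset_card_eq hu
  obtain ⟨e, heEH, heS⟩ := hprop S hScard
  refine ⟨u, e, heEH, fun w hw => ?_⟩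
  have : w ∈ Finset.univ.filter (fun w => u ∈ A w) := hSsub (heS hw)
  simp only [Finset.mem_filter, hA, Finset.mem_univ, true_and] at this
  exact this
end
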